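/- arXiv:2212.03105 — 2 statements merged into one kernel-verified Lean document; each statement's English description precedes it below -/
import Mathlib

section
/- If T is an extensible set theory (based on intuitionistic logic), then all of Visser's rules V_n are admissible in T. -/
set_option autoImplicit false
set_option linter.unusedVariables false

/-! ## Propositional formulas, intuitionistic and classical propositional logic -/

/-- Formulas of propositional logic, with countably many propositional letters. -/
inductive PropForm : Type
  | var : ℕ → PropForm
  | bot : PropForm
  | top : PropForm
  | and : PropForm → PropForm → PropForm
  | or : PropForm → PropForm → PropForm
  | imp : PropForm → PropForm → PropForm

namespace PropForm
/-- Negation is defined, as usual, by `¬A := A → ⊥`. -/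
def neg (A : PropForm) : PropForm := A.imp .bot
end PropForm

/-- Substitution of propositional formulas for propositional letters;
it commutes with `⊥`, `⊤` and the connectives. -/
def substProp (s : ℕ → PropForm) : PropForm → PropForm
  | .var n => s n
  | .bot => .bot
  | .top => .top
  | .and A B => .and (substProp s A) (substProp s B)
  | .or A B => .or (substProp s A) (substProp s B)
  | .imp A B => .imp (substProp s A) (substProp s B)

/-- Natural deduction for (intuitionistic) propositional logic, with an additional
set `Ax` of axioms (so that classical logic is obtained by adding excluded middle). -/
inductive PropProv (Ax : Set PropForm) : Set PropForm → PropForm → Prop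
  | hyp {Γ : Set PropForm} {A} : A ∈ Γ → PropProv Ax Γ A
  | axm {Γ : Set PropForm} {A} : A ∈ Ax → PropProv Ax Γ A
  | topI {Γ : Set PropForm} : PropProv Ax Γ .top
  | botE {Γ : Set PropForm} {A : PropForm} : PropProv Ax Γ .bot → PropProv Ax Γ A
  | andI {Γ : Set PropForm} {A B : PropForm} : PropProv Ax Γ A → PropProv Ax Γ B → PropProv Ax Γ (A.and B)
  | andE1 {Γ : Set PropForm} {A B : PropForm} : PropProv Ax Γ (A.and B) → PropProv Ax Γ A
  | andE2 {Γ : Set PropForm} {A B : PropForm} : PropProv Ax Γ (A.and B) → PropProv Ax Γ B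
  | orI1 {Γ : Set PropForm} {A B : PropForm} : PropProv Ax Γ A → PropProv Ax Γ (A.or B)
  | orI2 {Γ : Set PropForm} {A B : PropForm} : PropProv Ax Γ B → PropProv Ax Γ (A.or B)
  | orE {Γ : Set PropForm} {A B C : PropForm} : PropProv Ax Γ (A.or B) → PropProv Ax (insert A Γ) C →
      PropProv Ax (insert B Γ) C → PropProv Ax Γ C
  | impI {Γ : Set PropForm} {A B : PropForm} : PropProv Ax (insert A Γ) B → PropProv Ax Γ (A.imp B)
  | impE {Γ : Set PropForm} {A B : PropForm} : PropProv Ax Γ (A.imp B) → PropProv Ax Γ A → PropProv Ax Γ B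

/-- The instances of the law of excluded middle. -/
def emAxioms : Set PropForm := {A | ∃ B : PropForm, A = B.or B.neg}

/-- Derivability in intuitionistic propositional logic `IPC`. -/
def IPCProv : Set PropForm → PropForm → Prop := PropProv ∅

/-- Derivability in classical propositional logic `CPC` (adding excluded middle). -/
def CPCProv : Set PropForm → PropForm → Prop := PropProv emAxioms

/-- The theorems of `IPC`. -/
def IPCThms : Set PropForm := {A | IPCProv ∅ A}

/-- The theorems of `CPC`. -/
def CPCThms : Set PropForm := {A | CPCProv ∅ A}

/-- The rule `A / B` is admissible in `IPC`. -/
def AdmIPC (A B : PropForm) : Prop :=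
  ∀ s : ℕ → PropForm, substProp s A ∈ IPCThms → substProp s B ∈ IPCThms

/-- Admissibility of the rule `A / B` in a propositional logic given as its set of theorems. -/
def AdmInLogic (L : Set PropForm) (A B : PropForm) : Prop :=
  ∀ s : ℕ → PropForm, substProp s A ∈ L → substProp s B ∈ L

/-- A propositional logic: a set of theorems closed under modus ponens and substitution. -/
structure PropLogic where
  thms : Set PropForm
  mp_closed : ∀ {A B : PropForm}, A.imp B ∈ thms → A ∈ thms → B ∈ thms
  subst_closed : ∀ (s : ℕ → PropForm) {A : PropForm}, A ∈ thms → substProp s A ∈ thms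

/-- An intermediate propositional logic: `IPC ⊆ J ⊆ CPC`. -/
def PropLogic.Intermediate (J : PropLogic) : Prop := IPCThms ⊆ J.thms ∧ J.thms ⊆ CPCThms

/-! ### Visser's rules -/

def bigAnd (l : List PropForm) : PropForm := l.foldr .and .top
def bigOr (l : List PropForm) : PropForm := l.foldr .or .bot

/-- The antecedent `⋀_{i=1}^n (A_i → B_i)` of Visser's rule `V_n`. -/
def visserAnte (n : ℕ) (A : Fin (n+2) → PropForm) (B : Fin n → PropForm) : PropForm :=
  bigAnd (List.ofFn fun i : Fin n => (A (i.castLE (by omega))).imp (B i))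

/-- The premise `(⋀_{i=1}^n (A_i → B_i) → (A_{n+1} ∨ A_{n+2})) ∨ C` of Visser's rule `V_n`. -/
def visserPrem (n : ℕ) (A : Fin (n+2) → PropForm) (B : Fin n → PropForm) (C : PropForm) :
    PropForm :=
  ((visserAnte n A B).imp ((A ⟨n, by omega⟩).or (A ⟨n+1, by omega⟩))).or C

/-- The conclusion `⋁_{j=1}^{n+2} (⋀_{i=1}^n (A_i → B_i) → A_j) ∨ C` of Visser's rule `V_n`. -/
def visserConc (n : ℕ) (A : Fin (n+2) → PropForm) (B : Fin n → PropForm) (C : PropForm) :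
    PropForm :=
  (bigOr (List.ofFn fun j : Fin (n+2) => (visserAnte n A B).imp (A j))).or C

/-! ## The language of set theory and Kripke models of set theory -/

/-- Formulas in the language of set theory: a binary membership relation `∈`,
equality `=`, and the intuitionistic connectives and quantifiers
(`¬A` is defined as `A → ⊥`); variables are represented by natural numbers. -/
inductive ZFForm : Type
  | mem : ℕ → ℕ → ZFForm
  | eq : ℕ → ℕ → ZFForm
  | bot : ZFForm
  | top : ZFForm
  | and : ZFForm → ZFForm → ZFForm
  | or : ZFForm → ZFForm → ZFForm
  | imp : ZFForm → ZFForm → ZFForm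
  | all : ℕ → ZFForm → ZFForm
  | ex : ℕ → ZFForm → ZFForm

namespace ZFForm

/-- Negation: `¬A := A → ⊥`. -/
def neg (A : ZFForm) : ZFForm := A.imp .bot

/-- Biconditional: `A ↔ B := (A → B) ∧ (B → A)`. -/
def biimp (A B : ZFForm) : ZFForm := (A.imp B).and (B.imp A)

/-- The free variables of a set-theoretic formula. -/
def FV : ZFForm → Finset ℕ
  | .mem i j => {i, j}
  | .eq i j => {i, j}
  | .bot => ∅
  | .top => ∅
  | .and A B => A.FV ∪ B.FV
  | .or A B => A.FV ∪ B.FV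
  | .imp A B => A.FV ∪ B.FV
  | .all x A => A.FV.erase x
  | .ex x A => A.FV.erase x

/-- A sentence is a formula without free variables. -/
def IsSentence (A : ZFForm) : Prop := A.FV = ∅

end ZFForm

/-- A Kripke model for set theory: a partial order `(K, ≤)` of worlds, a (nonempty) domain
`Dom v` for every world, transition functions `tr : Dom v → Dom w` for `v ≤ w` (functorial),
and interpretations `mem v` of the membership relation that are preserved by the transition
functions; equality is interpreted as actual equality of domain elements. -/
structure SetKripkeModel where
  World : Type
  le : World → World → Prop
  le_refl : ∀ w, le w w
  le_trans : ∀ {u v w}, le u v → le v w → le u w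
  le_antisymm : ∀ {u v}, le u v → le v u → u = v
  Dom : World → Type
  dne : ∀ w, Nonempty (Dom w)
  tr : ∀ {v w}, le v w → Dom v → Dom w
  tr_refl : ∀ (v) (h : le v v) (x : Dom v), tr h x = x
  tr_trans : ∀ {u v w} (h1 : le u v) (h2 : le v w) (h3 : le u w) (x : Dom u),
      tr h2 (tr h1 x) = tr h3 x
  mem : ∀ w, Dom w → Dom w → Prop
  mem_mono : ∀ {v w} (h : le v w) (x y : Dom v), mem v x y → mem w (tr h x) (tr h y)

/-- The forcing relation of a Kripke model of set theory. -/
def zforce (M : SetKripkeModel) : ZFForm → (v : M.World) → (ℕ → M.Dom v) → Prop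
  | .mem i j, v, ρ => M.mem v (ρ i) (ρ j)
  | .eq i j, v, ρ => ρ i = ρ j
  | .bot, _, _ => False
  | .top, _, _ => True
  | .and A B, v, ρ => zforce M A v ρ ∧ zforce M B v ρ
  | .or A B, v, ρ => zforce M A v ρ ∨ zforce M B v ρ
  | .imp A B, v, ρ => ∀ (w : M.World) (h : M.le v w),
      zforce M A w (fun n => M.tr h (ρ n)) → zforce M B w (fun n => M.tr h (ρ n))
  | .all x A, v, ρ => ∀ (w : M.World) (h : M.le v w) (d : M.Dom w),
      zforce M A w (Function.update (fun n => M.tr h (ρ n)) x d)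
  | .ex x A, v, ρ => ∃ d : M.Dom v, zforce M A v (Function.update ρ x d)

/-- `M ⊩ φ`: the formula is forced at every world (under every assignment). -/
def Forces (M : SetKripkeModel) (φ : ZFForm) : Prop :=
  ∀ (v : M.World) (ρ : ℕ → M.Dom v), zforce M φ v ρ

/-- The data needed to extend a Kripke model of set theory with a new root `r` below all
worlds: a domain for the root, a membership relation on it, and transition functions to the
old domains, compatibly with the old transition functions and preserving membership.
The resulting model `E.toModel` is based on the frame `K⁺` and restricts to `M` on `K`. -/
structure RootExtension (M : SetKripkeModel) where
  RDom : Type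
  rdne : Nonempty RDom
  rmem : RDom → RDom → Prop
  rtr : (v : M.World) → RDom → M.Dom v
  rtr_compat : ∀ {v w : M.World} (h : M.le v w) (x : RDom), M.tr h (rtr v x) = rtr w x
  rmem_mono : ∀ (v : M.World) (x y : RDom), rmem x y → M.mem v (rtr v x) (rtr v y)

namespace RootExtension

variable {M : SetKripkeModel}

/-- The order on `K⁺ = K ∪ {r}`; `none` is the new root `r`. -/
def optLe (M : SetKripkeModel) : Option M.World → Option M.World → Prop
  | none, _ => True
  | some _, none => False
  | some v, some w => M.le v w

/-- The domains of the extended model. -/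
def Dom' (E : RootExtension M) : Option M.World → Type
  | none => E.RDom
  | some v => M.Dom v

/-- The transition functions of the extended model. -/
def tr' (E : RootExtension M) :
    ∀ {a b : Option M.World}, optLe M a b → E.Dom' a → E.Dom' b
  | none, none, _, x => x
  | none, some v, _, x => E.rtr v x
  | some _, none, h, _ => h.elim
  | some _, some _, h, x => M.tr h x

/-- The membership relations of the extended model. -/
def mem' (E : RootExtension M) : (a : Option M.World) → E.Dom' a → E.Dom' a → Prop
  | none => E.rmem
  | some v => M.mem v

/-- The extended model `M⁺`, based on the frame `K⁺` obtained by adding a new root,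
which restricts to `M` on `K`. -/
def toModel (E : RootExtension M) : SetKripkeModel where
  World := Option M.World
  le := optLe M
  le_refl := fun a => by cases a with
    | none => trivial
    | some v => exact M.le_refl v
  le_trans := by
    intro a b c h1 h2
    cases a with
    | none => trivial
    | some v =>
      cases b with
      | none => exact h1.elim
      | some w =>
        cases c with
        | none => exact h2.elim
        | some u => exact M.le_trans h1 h2
  le_antisymm := by
    intro a b h1 h2
    cases a with
    | none =>
      cases b with
      | none => rfl
      | some w => exact h2.elim
    | some v =>
      cases b with
      | none => exact h1.elim
      | some w => exact congrArg some (M.le_antisymm h1 h2)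
  Dom := E.Dom'
  dne := fun a => by cases a with
    | none => exact E.rdne
    | some v => exact M.dne v
  tr := fun {a b} h x => E.tr' h x
  tr_refl := by
    intro a h x
    cases a with
    | none => rfl
    | some v => exact M.tr_refl v h x
  tr_trans := by
    intro a b c h1 h2 h3 x
    cases a with
    | none =>
      cases b with
      | none =>
        cases c with
        | none => rfl
        | some u => rfl
      | some w =>
        cases c with
        | none => exact h2.elim
        | some u => exact E.rtr_compat h2 x
    | some v =>
      cases b with
      | none => exact h1.elim
      | some w =>
        cases c with
        | none => exact h2.elim
        | some u => exact M.tr_trans h1 h2 h3 x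
  mem := E.mem'
  mem_mono := by
    intro a b h x y hxy
    cases a with
    | none =>
      cases b with
      | none => exact hxy
      | some w => exact E.rmem_mono w x y hxy
    | some v =>
      cases b with
      | none => exact h.elim
      | some w => exact M.mem_mono h x y hxy

end RootExtension

/-- `Δ` is `Γ`-extensible: every Kripke model of set theory forcing `Γ ∪ Δ` can be extended,
by adding a new root, to a model (based on the extended frame and restricting to the original
model) that forces `Δ`. -/
def GammaExtensible (Γ Δ : Set ZFForm) : Prop :=
  ∀ M : SetKripkeModel, (∀ φ ∈ Γ ∪ Δ, Forces M φ) →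
    ∃ E : RootExtension M, ∀ φ ∈ Δ, Forces E.toModel φ

/-- `Δ` is extensible: it is `∅`-extensible. -/
def Extensible (Δ : Set ZFForm) : Prop := GammaExtensible ∅ Δ

/-! ## Renaming of variables and bounded formulas -/

namespace ZFForm

/-- Rename the free occurrences of the variable `x` to `y`. -/
def renameFree (x y : ℕ) : ZFForm → ZFForm
  | .mem i j => .mem (if i = x then y else i) (if j = x then y else j)
  | .eq i j => .eq (if i = x then y else i) (if j = x then y else j)
  | .bot => .bot
  | .top => .top
  | .and A B => .and (A.renameFree x y) (B.renameFree x y)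
  | .or A B => .or (A.renameFree x y) (B.renameFree x y)
  | .imp A B => .imp (A.renameFree x y) (B.renameFree x y)
  | .all z A => if z = x then .all z A else .all z (A.renameFree x y)
  | .ex z A => if z = x then .ex z A else .ex z (A.renameFree x y)

/-- `y` is free for (substitutable for) `x`: no free occurrence of `x` lies in the scope of a
quantifier binding `y`. -/
def freeFor (y x : ℕ) : ZFForm → Prop
  | .mem _ _ => True
  | .eq _ _ => True
  | .bot => True
  | .top => True
  | .and A B => freeFor y x A ∧ freeFor y x B
  | .or A B => freeFor y x A ∧ freeFor y x B
  | .imp A B => freeFor y x A ∧ freeFor y x B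
  | .all z A => x ∉ (ZFForm.all z A).FV ∨ (y ≠ z ∧ freeFor y x A)
  | .ex z A => x ∉ (ZFForm.ex z A).FV ∨ (y ≠ z ∧ freeFor y x A)

end ZFForm

/-- The `Δ₀` (bounded) formulas: all quantifiers are bounded. -/
inductive IsDelta0 : ZFForm → Prop
  | mem (i j : ℕ) : IsDelta0 (.mem i j)
  | eq (i j : ℕ) : IsDelta0 (.eq i j)
  | bot : IsDelta0 .bot
  | top : IsDelta0 .top
  | and {A B : ZFForm} : IsDelta0 A → IsDelta0 B → IsDelta0 (A.and B)
  | or {A B : ZFForm} : IsDelta0 A → IsDelta0 B → IsDelta0 (A.or B)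
  | imp {A B : ZFForm} : IsDelta0 A → IsDelta0 B → IsDelta0 (A.imp B)
  | ball {x y : ℕ} {A : ZFForm} : x ≠ y → IsDelta0 A →
      IsDelta0 (.all x ((ZFForm.mem x y).imp A))
  | bex {x y : ℕ} {A : ZFForm} : x ≠ y → IsDelta0 A →
      IsDelta0 (.ex x ((ZFForm.mem x y).and A))

/-! ## Provability for set theories, over intuitionistic first-order logic with equality -/

/-- Hilbert-style derivability in intuitionistic first-order logic (in the language of set
theory) from the set of axioms `Ax`, with modus ponens and generalisation. -/
inductive ZFProv (Ax : Set ZFForm) : ZFForm → Prop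
  | axm {A : ZFForm} : A ∈ Ax → ZFProv Ax A
  | k {A B : ZFForm} : ZFProv Ax (A.imp (B.imp A))
  | s {A B C : ZFForm} : ZFProv Ax ((A.imp (B.imp C)).imp ((A.imp B).imp (A.imp C)))
  | andI {A B : ZFForm} : ZFProv Ax (A.imp (B.imp (A.and B)))
  | andE1 {A B : ZFForm} : ZFProv Ax ((A.and B).imp A)
  | andE2 {A B : ZFForm} : ZFProv Ax ((A.and B).imp B)
  | orI1 {A B : ZFForm} : ZFProv Ax (A.imp (A.or B))
  | orI2 {A B : ZFForm} : ZFProv Ax (B.imp (A.or B))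
  | orE {A B C : ZFForm} : ZFProv Ax ((A.imp C).imp ((B.imp C).imp ((A.or B).imp C)))
  | botE {A : ZFForm} : ZFProv Ax (ZFForm.bot.imp A)
  | topI : ZFProv Ax .top
  | allE {x y : ℕ} {A : ZFForm} : A.freeFor y x →
      ZFProv Ax ((ZFForm.all x A).imp (A.renameFree x y))
  | exI {x y : ℕ} {A : ZFForm} : A.freeFor y x →
      ZFProv Ax ((A.renameFree x y).imp (.ex x A))
  | allShift {x : ℕ} {A B : ZFForm} : x ∉ A.FV →
      ZFProv Ax ((ZFForm.all x (A.imp B)).imp (A.imp (.all x B)))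
  | exShift {x : ℕ} {A B : ZFForm} : x ∉ B.FV →
      ZFProv Ax ((ZFForm.all x (A.imp B)).imp ((ZFForm.ex x A).imp B))
  | mp {A B : ZFForm} : ZFProv Ax (A.imp B) → ZFProv Ax A → ZFProv Ax B
  | gen {x : ℕ} {A : ZFForm} : ZFProv Ax A → ZFProv Ax (.all x A)

/-- The axioms of equality in the language of set theory. -/
def zfEqAxioms : Set ZFForm :=
  {A | (∃ i, A = ZFForm.eq i i) ∨
       (∃ i j, A = (ZFForm.eq i j).imp (.eq j i)) ∨
       (∃ i j k, A = (ZFForm.eq i j).imp ((ZFForm.eq j k).imp (.eq i k))) ∨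
       (∃ i j k, A = (ZFForm.eq i j).imp ((ZFForm.mem i k).imp (.mem j k))) ∨
       (∃ i j k, A = (ZFForm.eq i j).imp ((ZFForm.mem k i).imp (.mem k j)))}

/-- `T ⊢ φ`: provability in the set theory `T` over intuitionistic first-order logic
with equality. -/
def thyProv (T : Set ZFForm) (φ : ZFForm) : Prop := ZFProv (T ∪ zfEqAxioms) φ

/-! ## Propositional substitutions into the language of set theory -/

/-- Substitution of set-theoretic formulas for propositional letters. -/
def substZ (s : ℕ → ZFForm) : PropForm → ZFForm
  | .var n => s n
  | .bot => .bot
  | .top => .top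
  | .and A B => (substZ s A).and (substZ s B)
  | .or A B => (substZ s A).or (substZ s B)
  | .imp A B => (substZ s A).imp (substZ s B)

/-- The propositional logic `L(T)` of a set theory with provability predicate `Pr`:
all propositional formulas `A` with `Pr (σ(A))` for every substitution `σ` of set-theoretic
sentences for the propositional letters. -/
def LofPr (Pr : ZFForm → Prop) : Set PropForm :=
  {A | ∀ s : ℕ → ZFForm, (∀ n, (s n).IsSentence) → Pr (substZ s A)}

/-- The propositional rule `A / B` is admissible in a set theory: for every substitution of
set-theoretic sentences for the propositional letters, provability of `σ(A)` implies
provability of `σ(B)`. -/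
def AdmZ (Pr : ZFForm → Prop) (A B : PropForm) : Prop :=
  ∀ s : ℕ → ZFForm, (∀ n, (s n).IsSentence) → Pr (substZ s A) → Pr (substZ s B)

/-!
By the disjunction property of `T` it suffices to treat the case `T ⊢ X → A_{n+1} ∨ A_{n+2}`,
where `X = ⋀ (A_i → B_i)`. If no `X → A_j` is provable, completeness gives for each `j` a world
forcing `X` and refuting `A_j`. The upward closure of these worlds is a model of `T` in which `X`
holds everywhere, and extensibility puts below it a root forcing the premise. If the root
forces `X`, it forces `A_{n+1}` or `A_{n+2}`, which persists to the world refuting it. Otherwise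
the root fails some `A_i → B_i`, so some world forces `A_i` and refutes `B_i`: not the root,
since `A_i` would persist to the world refuting `A_i`, and not an old world, where `A_i → B_i`
holds. The disjunction property is the same argument with two refuting worlds.

Completeness is proved by a Henkin construction. Worlds of the canonical model are prime,
deductively closed theories over a level `i`; the Henkin witnesses added at level `i + 1` are
odd variables, while the axioms of `T` are first renamed to have only even bound variables, so
witnesses are never captured.
-/

/-! ### Hilbert-style derivations -/

namespace ZFProv

variable {Ax : Set ZFForm} {A B X Y Z : ZFForm}

theorem imp_self : ZFProv Ax (A.imp A) :=
  (s (B := A.imp A)).mp k |>.mp k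

theorem weaken (h : ZFProv Ax X) : ZFProv Ax (Y.imp X) := k.mp h

theorem trans (h₁ : ZFProv Ax (X.imp Y)) (h₂ : ZFProv Ax (Y.imp Z)) : ZFProv Ax (X.imp Z) :=
  (s.mp (k.mp h₂)).mp h₁

theorem swap (h : ZFProv Ax (X.imp (Y.imp Z))) : ZFProv Ax (Y.imp (X.imp Z)) :=
  trans k (s.mp h)

theorem postcomp : ZFProv Ax ((Y.imp Z).imp ((X.imp Y).imp (X.imp Z))) := trans k s

theorem precomp : ZFProv Ax ((X.imp Y).imp ((Y.imp Z).imp (X.imp Z))) := swap postcomp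

theorem swap_imp : ZFProv Ax ((X.imp (Y.imp Z)).imp (Y.imp (X.imp Z))) :=
  swap (trans k (swap s))

theorem of_axioms {Ax' : Set ZFForm} (h : ZFProv Ax A) (hAx : ∀ B ∈ Ax, ZFProv Ax' B) :
    ZFProv Ax' A := by
  induction h with
  | axm hA => exact hAx _ hA
  | k => exact k
  | s => exact s
  | andI => exact andI
  | andE1 => exact andE1
  | andE2 => exact andE2
  | orI1 => exact orI1
  | orI2 => exact orI2
  | orE => exact orE
  | botE => exact botE
  | topI => exact topI
  | allE hff => exact allE hff
  | exI hff => exact exI hff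
  | allShift hx => exact allShift hx
  | exShift hx => exact exShift hx
  | mp _ _ ih₁ ih₂ => exact ih₁.mp ih₂
  | gen _ ih => exact ih.gen

end ZFProv

/-! ### Derivations from hypotheses -/

def impCtx (L : List ZFForm) (A : ZFForm) : ZFForm := L.foldr .imp A

def ListDerives (Ax : Set ZFForm) (L : List ZFForm) (A : ZFForm) : Prop :=
  ZFProv Ax (impCtx L A)

namespace ListDerives

variable {Ax : Set ZFForm} {L L' : List ZFForm} {A B X Y : ZFForm}

theorem of_prov (h : ZFProv Ax A) : ListDerives Ax L A := by
  induction L with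
  | nil => exact h
  | cons F L ih => exact ZFProv.weaken ih

theorem impCtx_mono (h : ZFProv Ax (X.imp Y)) :
    ZFProv Ax ((impCtx L X).imp (impCtx L Y)) := by
  induction L with
  | nil => exact h
  | cons F L ih => exact ZFProv.postcomp.mp ih

theorem impCtx_distrib :
    ZFProv Ax ((impCtx L (A.imp B)).imp ((impCtx L A).imp (impCtx L B))) := by
  induction L with
  | nil => exact ZFProv.imp_self
  | cons F L ih => exact ZFProv.trans (ZFProv.postcomp.mp ih) ZFProv.s

theorem mp (h₁ : ListDerives Ax L (A.imp B)) (h₂ : ListDerives Ax L A) : ListDerives Ax L B :=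
  (impCtx_distrib.mp h₁).mp h₂

theorem imp_impCtx : ZFProv Ax (A.imp (impCtx L A)) := by
  induction L with
  | nil => exact ZFProv.imp_self
  | cons F L ih => exact ZFProv.trans ih ZFProv.k

theorem hyp (h : A ∈ L) : ListDerives Ax L A := by
  induction L with
  | nil => cases h
  | cons F L ih =>
    rcases List.mem_cons.mp h with rfl | h
    · exact imp_impCtx
    · exact ZFProv.weaken (ih h)

theorem imp_impCtx_comm : ZFProv Ax ((A.imp (impCtx L B)).imp (impCtx L (A.imp B))) := by
  induction L with
  | nil => exact ZFProv.imp_self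
  | cons C L ih => exact ZFProv.trans ZFProv.swap_imp (ZFProv.postcomp.mp ih)

theorem impI (h : ListDerives Ax (A :: L) B) : ListDerives Ax L (A.imp B) :=
  imp_impCtx_comm.mp h

theorem mono (hs : ∀ x ∈ L, x ∈ L') (h : ListDerives Ax L A) : ListDerives Ax L' A := by
  suffices ∀ L, (∀ x ∈ L, ListDerives Ax L' x) → ListDerives Ax L' (impCtx L A) →
      ListDerives Ax L' A from this L (fun x hx => hyp (hs x hx)) (of_prov h)
  intro L hL hA
  induction L with
  | nil => exact hA
  | cons F L ih =>
    exact ih (fun x hx => hL x (List.mem_cons_of_mem _ hx)) (mp hA (hL F List.mem_cons_self))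

end ListDerives

def Derives (Ax : Set ZFForm) (Γ : Set ZFForm) (A : ZFForm) : Prop :=
  ∃ L : List ZFForm, (∀ x ∈ L, x ∈ Γ) ∧ ListDerives Ax L A

namespace Derives

variable {Ax Γ Γ' : Set ZFForm} {A B C : ZFForm}

theorem of_prov (h : ZFProv Ax A) : Derives Ax Γ A := ⟨[], by simp, ListDerives.of_prov h⟩

theorem hyp (h : A ∈ Γ) : Derives Ax Γ A := ⟨[A], by simpa, ListDerives.hyp (by simp)⟩

theorem mono (hs : Γ ⊆ Γ') (h : Derives Ax Γ A) : Derives Ax Γ' A := by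
  obtain ⟨L, hL, d⟩ := h
  exact ⟨L, fun x hx => hs (hL x hx), d⟩

theorem mp (h₁ : Derives Ax Γ (A.imp B)) (h₂ : Derives Ax Γ A) : Derives Ax Γ B := by
  obtain ⟨L₁, hL₁, d₁⟩ := h₁
  obtain ⟨L₂, hL₂, d₂⟩ := h₂
  refine ⟨L₁ ++ L₂, fun x hx => (List.mem_append.mp hx).elim (hL₁ x) (hL₂ x), ?_⟩
  exact ListDerives.mp (ListDerives.mono (fun x hx => List.mem_append_left _ hx) d₁)
    (ListDerives.mono (fun x hx => List.mem_append_right _ hx) d₂)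

theorem of_imp (h : ZFProv Ax (A.imp B)) (hA : Derives Ax Γ A) : Derives Ax Γ B :=
  mp (of_prov h) hA

theorem impI (h : Derives Ax (insert A Γ) B) : Derives Ax Γ (A.imp B) := by
  classical
  obtain ⟨L, hL, d⟩ := h
  refine ⟨L.filter (· ∈ Γ), fun x hx => by simpa using (List.mem_filter.mp hx).2, ?_⟩
  refine ListDerives.impI (ListDerives.mono (fun x hx => ?_) d)
  by_cases hxΓ : x ∈ Γ
  · exact List.mem_cons_of_mem _ (List.mem_filter.mpr ⟨hx, by simpa⟩)
  · obtain rfl : x = A := (hL x hx).resolve_right hxΓ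
    exact List.mem_cons_self

theorem cut (h₁ : Derives Ax Γ A) (h₂ : Derives Ax (insert A Γ) B) : Derives Ax Γ B :=
  mp (impI h₂) h₁

theorem orE (h : Derives Ax Γ (A.or B)) (h₁ : Derives Ax (insert A Γ) C)
    (h₂ : Derives Ax (insert B Γ) C) : Derives Ax Γ C :=
  mp (mp (of_imp ZFProv.orE (impI h₁)) (impI h₂)) h

theorem andI (h₁ : Derives Ax Γ A) (h₂ : Derives Ax Γ B) : Derives Ax Γ (A.and B) :=
  mp (of_imp ZFProv.andI h₁) h₂

end Derives

namespace ZFProv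

variable {Ax : Set ZFForm} {A B X Y : ZFForm}

theorem and_congr (hA : ZFProv Ax (A.imp X)) (hB : ZFProv Ax (B.imp Y)) :
    ZFProv Ax ((A.and B).imp (X.and Y)) := by
  have h : ListDerives Ax [A.and B] (A.and B) := ListDerives.hyp (by simp)
  exact ListDerives.impI (L := []) <| ListDerives.mono (by simp) <|
    (ListDerives.mp (ListDerives.mp (ListDerives.of_prov andI)
      (ListDerives.mp (ListDerives.of_prov (trans andE1 hA)) h))
      (ListDerives.mp (ListDerives.of_prov (trans andE2 hB)) h))

theorem or_congr (hA : ZFProv Ax (A.imp X)) (hB : ZFProv Ax (B.imp Y)) :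
    ZFProv Ax ((A.or B).imp (X.or Y)) :=
  orE.mp (trans hA orI1) |>.mp (trans hB orI2)

theorem imp_congr (hA : ZFProv Ax (X.imp A)) (hB : ZFProv Ax (B.imp Y)) :
    ZFProv Ax ((A.imp B).imp (X.imp Y)) :=
  trans (postcomp.mp hB) (precomp.mp hA)

end ZFProv

/-! ### Renaming of variables -/

namespace ZFForm

def HasEvenBinders : ZFForm → Prop
  | .mem _ _ | .eq _ _ | .bot | .top => True
  | .and A B | .or A B | .imp A B => HasEvenBinders A ∧ HasEvenBinders B
  | .all x A | .ex x A => Even x ∧ HasEvenBinders A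

def varBound : ZFForm → ℕ
  | .mem i j | .eq i j => max i j + 1
  | .bot | .top => 0
  | .and A B | .or A B | .imp A B => max (varBound A) (varBound B)
  | .all x A | .ex x A => max (x + 1) (varBound A)

def size : ZFForm → ℕ
  | .mem _ _ | .eq _ _ | .bot | .top => 1
  | .and A B | .or A B | .imp A B => size A + size B + 1
  | .all _ A | .ex _ A => size A + 1

variable {A : ZFForm} {x y z c : ℕ}

theorem lt_varBound (h : z ∈ FV A) : z < varBound A := by
  induction A with
  | mem | eq => simp only [FV, varBound, Finset.mem_insert, Finset.mem_singleton] at h ⊢; omega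
  | bot | top => simp [FV] at h
  | and A B ihA ihB | or A B ihA ihB | imp A B ihA ihB =>
    simp only [FV, Finset.mem_union, varBound] at h ⊢
    rcases h with h | h
    · exact lt_max_of_lt_left (ihA h)
    · exact lt_max_of_lt_right (ihB h)
  | all w A ih | ex w A ih =>
    simp only [FV, Finset.mem_erase, varBound] at h ⊢
    exact lt_max_of_lt_right (ih h.2)

theorem freeFor_of_varBound_le (h : varBound A ≤ y) : freeFor y x A := by
  induction A with
  | mem | eq | bot | top => trivial
  | and A B ihA ihB | or A B ihA ihB | imp A B ihA ihB =>
    simp only [varBound, max_le_iff] at h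
    exact ⟨ihA h.1, ihB h.2⟩
  | all w A ih | ex w A ih =>
    simp only [varBound, max_le_iff] at h
    exact Or.inr ⟨by omega, ih h.2⟩

theorem freeFor_of_not_even (hA : HasEvenBinders A) (hc : ¬ Even c) : freeFor c x A := by
  induction A with
  | mem | eq | bot | top => trivial
  | and A B ihA ihB | or A B ihA ihB | imp A B ihA ihB => exact ⟨ihA hA.1, ihB hA.2⟩
  | all w A ih | ex w A ih => exact Or.inr ⟨fun h => hc (h ▸ hA.1), ih hA.2⟩

theorem freeFor_self : freeFor x x A := by
  induction A with
  | mem | eq | bot | top => trivial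
  | and A B ihA ihB | or A B ihA ihB | imp A B ihA ihB => exact ⟨ihA, ihB⟩
  | all w A ih | ex w A ih =>
    by_cases hx : x = w
    · exact Or.inl (by simp [FV, hx])
    · exact Or.inr ⟨hx, ih⟩

theorem renameFree_of_notMem (h : x ∉ FV A) : renameFree x y A = A := by
  induction A with
  | mem | eq =>
    simp only [FV, Finset.mem_insert, Finset.mem_singleton] at h
    simp [renameFree]; omega
  | bot | top => rfl
  | and A B ihA ihB | or A B ihA ihB | imp A B ihA ihB =>
    simp only [FV, Finset.mem_union, not_or] at h
    simp [renameFree, ihA h.1, ihB h.2]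
  | all w A ih | ex w A ih =>
    by_cases hw : w = x
    · simp [renameFree, hw]
    · simp only [FV, Finset.mem_erase, not_and] at h
      simp [renameFree, hw, ih (h (Ne.symm hw))]

theorem renameFree_self : renameFree x x A = A := by
  induction A with
  | mem | eq => simp [renameFree]; omega
  | bot | top => rfl
  | and A B ihA ihB | or A B ihA ihB | imp A B ihA ihB => simp [renameFree, ihA, ihB]
  | all w A ih | ex w A ih => by_cases hw : w = x <;> simp [renameFree, hw, ih]

theorem size_renameFree : size (renameFree x y A) = size A := by
  induction A with
  | mem | eq | bot | top => rfl
  | and A B ihA ihB | or A B ihA ihB | imp A B ihA ihB => simp [renameFree, size, ihA, ihB]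
  | all w A ih | ex w A ih => by_cases hw : w = x <;> simp [renameFree, hw, size, ih]

theorem HasEvenBinders.renameFree (hA : HasEvenBinders A) :
    HasEvenBinders (A.renameFree x y) := by
  induction A with
  | mem | eq | bot | top => trivial
  | and A B ihA ihB | or A B ihA ihB | imp A B ihA ihB => exact ⟨ihA hA.1, ihB hA.2⟩
  | all w A ih | ex w A ih =>
    by_cases hw : w = x
    · simpa [ZFForm.renameFree, hw] using hA
    · simpa [ZFForm.renameFree, hw, HasEvenBinders] using ⟨hA.1, ih hA.2⟩

theorem mem_FV_renameFree (h : z ∈ FV (renameFree x y A)) : z = y ∨ (z ∈ FV A ∧ z ≠ x) := by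
  induction A with
  | mem | eq =>
    simp only [renameFree, FV, Finset.mem_insert, Finset.mem_singleton] at h ⊢
    split_ifs at h <;> omega
  | bot | top => simp [renameFree, FV] at h
  | and A B ihA ihB | or A B ihA ihB | imp A B ihA ihB =>
    simp only [renameFree, FV, Finset.mem_union] at h ⊢
    rcases h with h | h
    · rcases ihA h with h | h <;> tauto
    · rcases ihB h with h | h <;> tauto
  | all w A ih | ex w A ih =>
    by_cases hw : w = x
    · subst hw
      simp only [renameFree, if_true, FV, Finset.mem_erase] at h ⊢
      exact Or.inr ⟨h, h.1⟩
    · simp only [renameFree, hw, if_false, FV, Finset.mem_erase] at h ⊢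
      rcases ih h.2 with h' | h' <;> tauto

theorem mem_FV_renameFree_of_ne (hzx : z ≠ x) (hz : z ∈ FV A) : z ∈ FV (renameFree x y A) := by
  induction A with
  | mem | eq =>
    simp only [renameFree, FV, Finset.mem_insert, Finset.mem_singleton] at hz ⊢
    split_ifs <;> omega
  | bot | top => simp [FV] at hz
  | and A B ihA ihB | or A B ihA ihB | imp A B ihA ihB =>
    simp only [renameFree, FV, Finset.mem_union] at hz ⊢
    exact hz.imp ihA ihB
  | all w A ih | ex w A ih =>
    simp only [FV, Finset.mem_erase] at hz
    by_cases hw : w = x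
    · simpa [renameFree, hw, FV] using hz
    · simpa [renameFree, hw, FV] using ⟨hz.1, ih hz.2⟩

theorem notMem_FV_renameFree (hxy : x ≠ y) : x ∉ FV (renameFree x y A) := fun h => by
  rcases mem_FV_renameFree h with h | h
  · exact hxy h
  · exact h.2 rfl

theorem renameFree_renameFree (hff : freeFor y x A) (hy : y ∉ FV A) :
    renameFree y x (renameFree x y A) = A := by
  rcases eq_or_ne x y with rfl | hxy
  · simp [renameFree_self]
  induction A with
  | mem | eq =>
    simp only [FV, Finset.mem_insert, Finset.mem_singleton, not_or] at hy
    simp only [renameFree]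
    split_ifs <;> simp_all
  | bot | top => rfl
  | and A B ihA ihB | or A B ihA ihB | imp A B ihA ihB =>
    simp only [FV, Finset.mem_union, not_or] at hy
    simp [renameFree, ihA hff.1 hy.1, ihB hff.2 hy.2]
  | all w A ih | ex w A ih =>
    simp only [FV, Finset.mem_erase, not_and] at hy
    by_cases hw : w = x
    · subst hw
      simp [renameFree, hxy, renameFree_of_notMem (hy hxy.symm)]
    rcases hff with hff | ⟨hyw, hff⟩
    · have hxA : x ∉ FV A := fun h => hff (Finset.mem_erase.mpr ⟨Ne.symm hw, h⟩)
      by_cases hwy : w = y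
      · simp [renameFree, hwy, renameFree_of_notMem hxA]
      · simp [renameFree, hw, hwy, renameFree_of_notMem hxA,
          renameFree_of_notMem (hy (Ne.symm hwy))]
    · simp [renameFree, hw, Ne.symm hyw, ih hff (hy hyw)]

theorem freeFor_renameFree (hff : freeFor y x A) (hy : y ∉ FV A) :
    freeFor x y (renameFree x y A) := by
  rcases eq_or_ne x y with rfl | hxy
  · rw [renameFree_self]; exact freeFor_self
  induction A with
  | mem | eq | bot | top => trivial
  | and A B ihA ihB | or A B ihA ihB | imp A B ihA ihB =>
    simp only [FV, Finset.mem_union, not_or] at hy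
    exact ⟨ihA hff.1 hy.1, ihB hff.2 hy.2⟩
  | all w A ih | ex w A ih =>
    by_cases hw : w = x
    · subst hw; simp [renameFree, freeFor, hy]
    rcases hff with hff | ⟨hyw, hff⟩
    · have hxA : x ∉ FV A := fun h => hff (Finset.mem_erase.mpr ⟨Ne.symm hw, h⟩)
      simp [renameFree, hw, renameFree_of_notMem hxA, freeFor, hy]
    · simp only [FV, Finset.mem_erase, not_and] at hy
      simpa [renameFree, hw, freeFor] using Or.inr ⟨Ne.symm hw, ih hff (hy hyw)⟩

end ZFForm

/-! ### Kripke semantics -/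

namespace SetKripkeModel

variable (M : SetKripkeModel)

theorem tr_comp_refl {v : M.World} (ρ : ℕ → M.Dom v) :
    (fun n => M.tr (M.le_refl v) (ρ n)) = ρ :=
  funext fun n => M.tr_refl v _ (ρ n)

theorem tr_comp_trans {u v w : M.World} (h₁ : M.le u v) (h₂ : M.le v w) (ρ : ℕ → M.Dom u) :
    (fun n => M.tr h₂ (M.tr h₁ (ρ n))) = fun n => M.tr (M.le_trans h₁ h₂) (ρ n) :=
  funext fun n => M.tr_trans h₁ h₂ _ (ρ n)

theorem tr_comp_update {v w : M.World} (h : M.le v w) (ρ : ℕ → M.Dom v) (x : ℕ) (d : M.Dom v) :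
    (fun n => M.tr h (Function.update ρ x d n)) =
      Function.update (fun n => M.tr h (ρ n)) x (M.tr h d) := by
  funext n
  by_cases hn : n = x <;> simp [hn]

end SetKripkeModel

section Forcing

variable {M : SetKripkeModel}

theorem zforce_congr (A : ZFForm) {v : M.World} {ρ ρ' : ℕ → M.Dom v}
    (h : ∀ k ∈ A.FV, ρ k = ρ' k) : zforce M A v ρ ↔ zforce M A v ρ' := by
  induction A generalizing v with
  | mem i j | eq i j => simp [zforce, h i (by simp [ZFForm.FV]), h j (by simp [ZFForm.FV])]
  | bot | top => exact Iff.rfl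
  | and A B ihA ihB | or A B ihA ihB =>
    simp only [zforce, ihA fun k hk => h k (by simp [ZFForm.FV, hk]),
      ihB fun k hk => h k (by simp [ZFForm.FV, hk])]
  | imp A B ihA ihB =>
    simp only [zforce]
    refine forall_congr' fun w => forall_congr' fun hw => ?_
    rw [ihA fun k hk => congrArg (M.tr hw) (h k (by simp [ZFForm.FV, hk])),
      ihB fun k hk => congrArg (M.tr hw) (h k (by simp [ZFForm.FV, hk]))]
  | all z A ih =>
    refine forall_congr' fun w => forall_congr' fun hw => forall_congr' fun d => ih fun k hk => ?_
    by_cases hkz : k = z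
    · simp [hkz]
    · simpa [Function.update_apply, hkz] using
        congrArg (M.tr hw) (h k (by simp [ZFForm.FV, hkz, hk]))
  | ex z A ih =>
    refine exists_congr fun d => ih fun k hk => ?_
    by_cases hkz : k = z
    · simp [hkz]
    · simpa [Function.update_apply, hkz] using h k (by simp [ZFForm.FV, hkz, hk])

theorem zforce_sentence_iff {A : ZFForm} (hA : A.IsSentence) {v : M.World}
    (ρ ρ' : ℕ → M.Dom v) : zforce M A v ρ ↔ zforce M A v ρ' :=
  zforce_congr A fun k hk => absurd hk (by simp [show A.FV = ∅ from hA])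

theorem zforce_update_of_notMem {A : ZFForm} {x : ℕ} (hx : x ∉ A.FV) {v : M.World}
    (ρ : ℕ → M.Dom v) (d : M.Dom v) :
    zforce M A v (Function.update ρ x d) ↔ zforce M A v ρ :=
  zforce_congr A fun k hk => Function.update_of_ne (by rintro rfl; exact hx hk) _ _

theorem zforce_mono (A : ZFForm) {v w : M.World} (h : M.le v w) {ρ : ℕ → M.Dom v}
    (hA : zforce M A v ρ) : zforce M A w (fun n => M.tr h (ρ n)) := by
  induction A generalizing v w with
  | mem i j => exact M.mem_mono h _ _ hA
  | eq i j => exact congrArg (M.tr h) hA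
  | bot => exact hA
  | top => trivial
  | and A B ihA ihB => exact ⟨ihA h hA.1, ihB h hA.2⟩
  | or A B ihA ihB => exact hA.imp (ihA h) (ihB h)
  | imp A B =>
    intro u hu
    rw [M.tr_comp_trans h hu ρ]
    exact hA u (M.le_trans h hu)
  | all z A =>
    intro u hu
    rw [M.tr_comp_trans h hu ρ]
    exact hA u (M.le_trans h hu)
  | ex z A ih =>
    obtain ⟨d, hd⟩ := hA
    exact ⟨M.tr h d, M.tr_comp_update h ρ z d ▸ ih h hd⟩

theorem zforce_mp {A B : ZFForm} {v : M.World} {ρ : ℕ → M.Dom v}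
    (h : zforce M (A.imp B) v ρ) (hA : zforce M A v ρ) : zforce M B v ρ := by
  simpa only [M.tr_comp_refl] using h v (M.le_refl v) (by simpa only [M.tr_comp_refl] using hA)

theorem zforce_renameFree {A : ZFForm} {x y : ℕ} (hff : A.freeFor y x) {v : M.World}
    (ρ : ℕ → M.Dom v) :
    zforce M (A.renameFree x y) v ρ ↔ zforce M A v (Function.update ρ x (ρ y)) := by
  induction A generalizing v with
  | mem i j | eq i j =>
    by_cases hi : i = x <;> by_cases hj : j = x <;>
      simp [ZFForm.renameFree, zforce, hi, hj]
  | bot | top => exact Iff.rfl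
  | and A B ihA ihB | or A B ihA ihB =>
    simp only [ZFForm.renameFree, zforce, ihA hff.1, ihB hff.2]
  | imp A B ihA ihB =>
    simp only [ZFForm.renameFree, zforce]
    refine forall_congr' fun w => forall_congr' fun hw => ?_
    rw [ihA hff.1, ihB hff.2, M.tr_comp_update hw ρ x (ρ y)]
  | all z A ih | ex z A ih =>
    by_cases hz : z = x
    · subst hz
      simp only [ZFForm.renameFree, if_true]
      exact (zforce_update_of_notMem (by simp [ZFForm.FV]) ρ _).symm
    rcases hff with hff | ⟨hyz, hff⟩
    · rw [ZFForm.renameFree_of_notMem hff]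
      exact (zforce_update_of_notMem hff ρ _).symm
    simp only [ZFForm.renameFree, hz, if_false, zforce]
    first
    | refine forall_congr' fun w => forall_congr' fun hw => forall_congr' fun d => ?_
      rw [ih hff, Function.update_of_ne hyz, Function.update_comm hz, M.tr_comp_update hw ρ x]
    | refine exists_congr fun d => ?_
      rw [ih hff, Function.update_of_ne hyz, Function.update_comm hz]

end Forcing

/-! ### Soundness -/

section Soundness

variable {M : SetKripkeModel}

theorem soundness {Ax : Set ZFForm} {φ : ZFForm} (h : ZFProv Ax φ)
    (hAx : ∀ A ∈ Ax, Forces M A) : Forces M φ := by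
  induction h with
  | axm hA => exact hAx _ hA
  | k =>
    intro v ρ w₁ h₁ H₁ w₂ h₂ _
    exact zforce_mono _ h₂ H₁
  | s =>
    intro v ρ w₁ h₁ H₁ w₂ h₂ H₂ w₃ h₃ H₃
    have hBC := H₁ w₃ (M.le_trans h₂ h₃)
    rw [← M.tr_comp_trans h₂ h₃] at hBC
    exact zforce_mp (hBC H₃) (H₂ w₃ h₃ H₃)
  | andI =>
    intro v ρ w₁ h₁ H₁ w₂ h₂ H₂
    exact ⟨zforce_mono _ h₂ H₁, H₂⟩
  | andE1 => exact fun v ρ w₁ h₁ H₁ => H₁.1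
  | andE2 => exact fun v ρ w₁ h₁ H₁ => H₁.2
  | orI1 => exact fun v ρ w₁ h₁ H₁ => Or.inl H₁
  | orI2 => exact fun v ρ w₁ h₁ H₁ => Or.inr H₁
  | orE =>
    intro v ρ w₁ h₁ H₁ w₂ h₂ H₂ w₃ h₃ H₃
    rcases H₃ with HA | HB
    · have hAC := H₁ w₃ (M.le_trans h₂ h₃)
      rw [← M.tr_comp_trans h₂ h₃] at hAC
      exact hAC HA
    · exact H₂ w₃ h₃ HB
  | botE => exact fun v ρ w₁ h₁ H₁ => H₁.elim
  | topI => exact fun v ρ => trivial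
  | @allE x y A hff =>
    intro v ρ w hw H
    rw [zforce_renameFree hff]
    simpa only [M.tr_comp_refl] using H w (M.le_refl w) (M.tr hw (ρ y))
  | @exI x y A hff =>
    intro v ρ w hw H
    exact ⟨_, (zforce_renameFree hff _).mp H⟩
  | @allShift x A B hx =>
    intro v ρ w₁ h₁ H w₂ h₂ HA w₃ h₃ d
    have hA₃ := zforce_mono A h₃ HA
    rw [M.tr_comp_trans h₂ h₃] at hA₃ ⊢
    exact zforce_mp (H w₃ (M.le_trans h₂ h₃) d) ((zforce_update_of_notMem hx _ d).mpr hA₃)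
  | @exShift x A B hx =>
    intro v ρ w₁ h₁ H w₂ h₂ ⟨d, hd⟩
    exact (zforce_update_of_notMem hx _ d).mp (zforce_mp (H w₂ h₂ d) hd)
  | mp _ _ ih₁ ih₂ => exact fun v ρ => zforce_mp (ih₁ v ρ) (ih₂ v ρ)
  | gen _ ih => exact fun v ρ w hw d => ih w _

theorem forces_of_mem_zfEqAxioms {A : ZFForm} (hA : A ∈ zfEqAxioms) : Forces M A := by
  rcases hA with ⟨i, rfl⟩ | ⟨i, j, rfl⟩ | ⟨i, j, k, rfl⟩ | ⟨i, j, k, rfl⟩ | ⟨i, j, k, rfl⟩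
  · exact fun v ρ => rfl
  · exact fun v ρ w h H => H.symm
  · exact fun v ρ w₁ h₁ H₁ w₂ h₂ H₂ => (congrArg (M.tr h₂) H₁).trans H₂
  · intro v ρ w₁ h₁ (H₁ : M.tr h₁ (ρ i) = M.tr h₁ (ρ j)) w₂ h₂ H₂
    simpa only [zforce, H₁] using H₂
  · intro v ρ w₁ h₁ (H₁ : M.tr h₁ (ρ i) = M.tr h₁ (ρ j)) w₂ h₂ H₂
    simpa only [zforce, H₁] using H₂

theorem soundness_thyProv {T : Set ZFForm} {φ : ZFForm} (h : thyProv T φ)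
    (hT : ∀ A ∈ T, Forces M A) : Forces M φ :=
  soundness h fun A hA => hA.elim (hT A) forces_of_mem_zfEqAxioms

end Soundness

/-! ### Quantifier rules and α-normalisation -/

namespace ZFProv

variable {Ax : Set ZFForm} {A B Q X : ZFForm} {x c : ℕ}

theorem all_elim_self : ZFProv Ax ((ZFForm.all x A).imp A) := by
  simpa only [ZFForm.renameFree_self] using allE (Ax := Ax) (y := x) (A := A) ZFForm.freeFor_self

theorem ex_intro_self : ZFProv Ax (A.imp (ZFForm.ex x A)) := by
  simpa only [ZFForm.renameFree_self] using exI (Ax := Ax) (y := x) (A := A) ZFForm.freeFor_self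

theorem imp_all_of_imp (hx : x ∉ Q.FV) (h : ZFProv Ax (Q.imp A)) :
    ZFProv Ax (Q.imp (ZFForm.all x A)) :=
  (allShift hx).mp (gen h)

theorem all_mono (h : ZFProv Ax (A.imp B)) : ZFProv Ax ((ZFForm.all x A).imp (ZFForm.all x B)) :=
  imp_all_of_imp (by simp [ZFForm.FV]) (trans all_elim_self h)

theorem ex_mono (h : ZFProv Ax (A.imp B)) : ZFProv Ax ((ZFForm.ex x A).imp (ZFForm.ex x B)) :=
  (exShift (by simp [ZFForm.FV])).mp (gen (trans h ex_intro_self))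

theorem all_imp_all_renameFree (hc : c ∉ A.FV) (hff : A.freeFor c x) :
    ZFProv Ax ((ZFForm.all x A).imp (ZFForm.all c (A.renameFree x c))) :=
  imp_all_of_imp (fun h => hc (Finset.mem_of_mem_erase h)) (allE hff)

theorem all_renameFree_imp_all (hc : c ∉ A.FV) (hff : A.freeFor c x) :
    ZFProv Ax ((ZFForm.all c (A.renameFree x c)).imp (ZFForm.all x A)) := by
  rcases eq_or_ne c x with rfl | hcx
  · rw [ZFForm.renameFree_self]; exact imp_self
  have h := allE (Ax := Ax) (ZFForm.freeFor_renameFree hff hc)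
  rw [ZFForm.renameFree_renameFree hff hc] at h
  exact imp_all_of_imp (fun h => ZFForm.notMem_FV_renameFree hcx.symm (Finset.mem_of_mem_erase h)) h

theorem ex_imp_ex_renameFree (hc : c ∉ A.FV) (hff : A.freeFor c x) :
    ZFProv Ax ((ZFForm.ex x A).imp (ZFForm.ex c (A.renameFree x c))) := by
  rcases eq_or_ne c x with rfl | hcx
  · rw [ZFForm.renameFree_self]; exact imp_self
  have h := exI (Ax := Ax) (ZFForm.freeFor_renameFree hff hc)
  rw [ZFForm.renameFree_renameFree hff hc] at h
  exact (exShift fun h => ZFForm.notMem_FV_renameFree hcx.symm (Finset.mem_of_mem_erase h)).mp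
    (gen h)

theorem ex_renameFree_imp_ex (hc : c ∉ A.FV) (hff : A.freeFor c x) :
    ZFProv Ax ((ZFForm.ex c (A.renameFree x c)).imp (ZFForm.ex x A)) :=
  (exShift fun h => hc (Finset.mem_of_mem_erase h)).mp (gen (exI hff))

theorem all_impCtx_imp {L : List ZFForm} (hL : ∀ F ∈ L, c ∉ F.FV) :
    ZFProv Ax ((ZFForm.all c (impCtx L X)).imp (impCtx L (ZFForm.all c X))) := by
  induction L with
  | nil => exact imp_self
  | cons F L ih =>
    exact trans (allShift (hL F List.mem_cons_self))
      (postcomp.mp (ih fun G hG => hL G (List.mem_cons_of_mem _ hG)))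

end ZFProv

namespace ListDerives

variable {Ax : Set ZFForm} {L : List ZFForm} {A B : ZFForm} {x c : ℕ}

theorem all_intro (hc : c ∉ A.FV) (hff : A.freeFor c x) (hL : ∀ F ∈ L, c ∉ F.FV)
    (h : ListDerives Ax L (A.renameFree x c)) : ListDerives Ax L (ZFForm.all x A) :=
  (impCtx_mono (ZFProv.all_renameFree_imp_all hc hff)).mp ((ZFProv.all_impCtx_imp hL).mp h.gen)

theorem ex_elim (hc : c ∉ A.FV) (hff : A.freeFor c x) (hcB : c ∉ B.FV)
    (hL : ∀ F ∈ L, c ∉ F.FV) (h : ListDerives Ax L ((A.renameFree x c).imp B)) :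
    ListDerives Ax L ((ZFForm.ex x A).imp B) :=
  (impCtx_mono (ZFProv.trans (ZFProv.exShift hcB)
    (ZFProv.precomp.mp (ZFProv.ex_imp_ex_renameFree hc hff)))).mp
    ((ZFProv.all_impCtx_imp hL).mp h.gen)

end ListDerives

namespace Derives

variable {Ax Γ : Set ZFForm} {A B : ZFForm} {x c : ℕ}

theorem all_intro (hc : c ∉ A.FV) (hff : A.freeFor c x) (hΓ : ∀ F ∈ Γ, c ∉ F.FV)
    (h : Derives Ax Γ (A.renameFree x c)) : Derives Ax Γ (ZFForm.all x A) := by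
  obtain ⟨L, hL, d⟩ := h
  exact ⟨L, hL, d.all_intro hc hff fun F hF => hΓ F (hL F hF)⟩

theorem ex_elim (hex : ZFForm.ex x A ∈ Γ) (hc : c ∉ A.FV) (hff : A.freeFor c x)
    (hcB : c ∉ B.FV) (hΓ : ∀ F ∈ Γ, c ∉ F.FV)
    (h : Derives Ax (insert (A.renameFree x c) Γ) B) : Derives Ax Γ B := by
  obtain ⟨L, hL, d⟩ := impI h
  exact mp ⟨L, hL, d.ex_elim hc hff hcB fun F hF => hΓ F (hL F hF)⟩ (hyp hex)

end Derives

namespace ZFForm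

/-- Renames every bound variable to an even variable above all variables of its scope. -/
def toEvenBinders : ZFForm → ZFForm
  | .mem i j => .mem i j
  | .eq i j => .eq i j
  | .bot => .bot
  | .top => .top
  | .and A B => .and A.toEvenBinders B.toEvenBinders
  | .or A B => .or A.toEvenBinders B.toEvenBinders
  | .imp A B => .imp A.toEvenBinders B.toEvenBinders
  | .all x A => .all (2 * A.toEvenBinders.varBound)
      (A.toEvenBinders.renameFree x (2 * A.toEvenBinders.varBound))
  | .ex x A => .ex (2 * A.toEvenBinders.varBound)
      (A.toEvenBinders.renameFree x (2 * A.toEvenBinders.varBound))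

theorem hasEvenBinders_toEvenBinders (A : ZFForm) : A.toEvenBinders.HasEvenBinders := by
  induction A with
  | mem | eq | bot | top => trivial
  | and A B ihA ihB | or A B ihA ihB | imp A B ihA ihB => exact ⟨ihA, ihB⟩
  | all x A ih | ex x A ih => exact ⟨even_two_mul _, ih.renameFree⟩

theorem FV_toEvenBinders (A : ZFForm) : A.toEvenBinders.FV = A.FV := by
  induction A with
  | mem | eq | bot | top => rfl
  | and A B ihA ihB | or A B ihA ihB | imp A B ihA ihB => simp [toEvenBinders, FV, ihA, ihB]
  | all x A ih | ex x A ih =>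
    ext z
    simp only [toEvenBinders, FV, Finset.mem_erase, ← ih]
    constructor
    · rintro ⟨hzc, hz⟩
      exact (mem_FV_renameFree hz).resolve_left hzc |>.symm
    · rintro ⟨hzx, hz⟩
      exact ⟨by have := lt_varBound hz; omega, mem_FV_renameFree_of_ne hzx hz⟩

end ZFForm

theorem ZFProv.toEvenBinders_equiv {Ax : Set ZFForm} (A : ZFForm) :
    ZFProv Ax (A.imp A.toEvenBinders) ∧ ZFProv Ax (A.toEvenBinders.imp A) := by
  induction A with
  | mem | eq | bot | top => exact ⟨imp_self, imp_self⟩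
  | and A B ihA ihB => exact ⟨and_congr ihA.1 ihB.1, and_congr ihA.2 ihB.2⟩
  | or A B ihA ihB => exact ⟨or_congr ihA.1 ihB.1, or_congr ihA.2 ihB.2⟩
  | imp A B ihA ihB => exact ⟨imp_congr ihA.2 ihB.1, imp_congr ihA.1 ihB.2⟩
  | all x A ih | ex x A ih =>
    have hc : 2 * A.toEvenBinders.varBound ∉ A.toEvenBinders.FV := fun h => by
      have := ZFForm.lt_varBound h; omega
    have hff : A.toEvenBinders.freeFor (2 * A.toEvenBinders.varBound) x :=
      ZFForm.freeFor_of_varBound_le (by omega)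
    first
    | exact ⟨trans (all_mono ih.1) (all_imp_all_renameFree hc hff),
        trans (all_renameFree_imp_all hc hff) (all_mono ih.2)⟩
    | exact ⟨trans (ex_mono ih.1) (ex_imp_ex_renameFree hc hff),
        trans (ex_renameFree_imp_ex hc hff) (ex_mono ih.2)⟩

/-! ### Lindenbaum's lemma -/

namespace ZFForm

def code : ZFForm → ℕ
  | .mem i j => Nat.pair 0 (Nat.pair i j)
  | .eq i j => Nat.pair 1 (Nat.pair i j)
  | .bot => Nat.pair 2 0
  | .top => Nat.pair 3 0
  | .and A B => Nat.pair 4 (Nat.pair A.code B.code)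
  | .or A B => Nat.pair 5 (Nat.pair A.code B.code)
  | .imp A B => Nat.pair 6 (Nat.pair A.code B.code)
  | .all x A => Nat.pair 7 (Nat.pair x A.code)
  | .ex x A => Nat.pair 8 (Nat.pair x A.code)

theorem code_injective : Function.Injective code := by
  intro A
  induction A with
  | mem | eq | bot | top =>
    intro B h; cases B <;> simp_all [code, Nat.pair_eq_pair]
  | and A B ihA ihB | or A B ihA ihB | imp A B ihA ihB =>
    intro C h; cases C <;> simp [code, Nat.pair_eq_pair] at h
    rw [ihA h.1, ihB h.2]
  | all x A ih | ex x A ih =>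
    intro C h; cases C <;> simp [code, Nat.pair_eq_pair] at h
    rw [h.1, ih h.2]

instance : Nonempty ZFForm := ⟨.bot⟩

noncomputable def enum : ℕ → ZFForm := Function.invFun code

theorem enum_code (A : ZFForm) : enum A.code = A := Function.leftInverse_invFun code_injective A

end ZFForm

/-- Being odd, a Henkin constant is never captured by the binders of a formula with
`HasEvenBinders`. -/
def henkinConst (i j : ℕ) : ℕ := 2 * Nat.pair i j + 1

def IsConst (i v : ℕ) : Prop := ∃ i' j, i' ≤ i ∧ v = henkinConst i' j

theorem not_even_henkinConst (i j : ℕ) : ¬ Even (henkinConst i j) := by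
  simp [henkinConst, parity_simps]

theorem lt_henkinConst (i j : ℕ) : j < henkinConst i j := by
  have := Nat.right_le_pair i j; unfold henkinConst; omega

theorem IsConst.not_even {i v : ℕ} (h : IsConst i v) : ¬ Even v := by
  obtain ⟨i', j, -, rfl⟩ := h; exact not_even_henkinConst i' j

theorem IsConst.mono {i i' v : ℕ} (h : i ≤ i') (hv : IsConst i v) : IsConst i' v := by
  obtain ⟨a, b, ha, rfl⟩ := hv; exact ⟨a, b, ha.trans h, rfl⟩

theorem isConst_henkinConst (i j : ℕ) : IsConst i (henkinConst i j) := ⟨i, j, le_rfl, rfl⟩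

theorem not_isConst_henkinConst_succ {i j : ℕ} : ¬ IsConst i (henkinConst (i + 1) j) := by
  rintro ⟨a, b, ha, hab⟩
  have := Nat.pair_eq_pair.mp
    (by unfold henkinConst at hab; omega : Nat.pair a b = Nat.pair (i + 1) j)
  omega

def InLang (i : ℕ) (A : ZFForm) : Prop := A.HasEvenBinders ∧ ∀ v ∈ A.FV, IsConst i v

theorem InLang.mono {i i' : ℕ} {A : ZFForm} (h : i ≤ i') (hA : InLang i A) : InLang i' A :=
  ⟨hA.1, fun v hv => (hA.2 v hv).mono h⟩

theorem InLang.renameFree {i x c : ℕ} {A : ZFForm} (hA : A.HasEvenBinders)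
    (hFV : ∀ v ∈ A.FV, v ≠ x → IsConst i v) (hc : IsConst i c) : InLang i (A.renameFree x c) :=
  ⟨hA.renameFree, fun v hv => (ZFForm.mem_FV_renameFree hv).elim (· ▸ hc) fun h => hFV v h.1 h.2⟩

def VarsWithin (i m : ℕ) (A : ZFForm) : Prop := ∀ v ∈ A.FV, IsConst i v ∨ v < m

theorem VarsWithin.mono {i m m' : ℕ} {A : ZFForm} (h : m ≤ m') (hA : VarsWithin i m A) :
    VarsWithin i m' A :=
  fun v hv => (hA v hv).imp_right (·.trans_le h)

theorem VarsWithin.notMem {i m j : ℕ} {A : ZFForm} (hA : VarsWithin i m A)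
    (hm : m ≤ henkinConst (i + 1) j) : henkinConst (i + 1) j ∉ A.FV :=
  fun h => (hA _ h).elim not_isConst_henkinConst_succ (by omega)

def henkinWitness (c : ℕ) : ZFForm → Set ZFForm
  | .ex x A => {A.renameFree x c}
  | _ => ∅

theorem mem_henkinWitness {c : ℕ} {G F : ZFForm} :
    F ∈ henkinWitness c G ↔ ∃ x A, G = .ex x A ∧ F = A.renameFree x c := by
  cases G <;> simp [henkinWitness]

theorem not_derives_union_henkinWitness {Ax Δ : Set ZFForm} {G B : ZFForm} {c : ℕ}
    (hG : G.HasEvenBinders) (hc : ¬ Even c) (hΔ : ∀ F ∈ insert G Δ, c ∉ F.FV) (hB : c ∉ B.FV)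
    (h : ¬ Derives Ax (insert G Δ) B) : ¬ Derives Ax (insert G Δ ∪ henkinWitness c G) B := by
  cases G with
  | ex x A =>
    have hcx : c ≠ x := fun e => hc (e ▸ hG.1)
    have hcA : c ∉ A.FV := fun h => hΔ _ (Set.mem_insert _ _) (Finset.mem_erase.mpr ⟨hcx, h⟩)
    intro hd
    refine h (Derives.ex_elim (Set.mem_insert _ _) hcA (ZFForm.freeFor_of_not_even hG.2 hc)
      hB hΔ ?_)
    simpa [henkinWitness, Set.union_singleton] using hd
  | _ => simpa [henkinWitness] using h

section Lindenbaum

variable (Ax : Set ZFForm) (i : ℕ) (B : ZFForm)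

open Classical in
/-- `s.2` bounds the variables used so far, so the Henkin constant chosen here is fresh. -/
noncomputable def lindenbaumStep (G : ZFForm) (s : Set ZFForm × ℕ) : Set ZFForm × ℕ :=
  if InLang (i + 1) G ∧ ¬ Derives Ax (insert G s.1) B then
    (insert G s.1 ∪ henkinWitness (henkinConst (i + 1) (max s.2 G.varBound)) G,
      henkinConst (i + 1) (max s.2 G.varBound) + 1)
  else s

noncomputable def lindenbaumChain (Γ : Set ZFForm) (m : ℕ) : ℕ → Set ZFForm × ℕ
  | 0 => (Γ, m)
  | k + 1 => lindenbaumStep Ax i B (ZFForm.enum k) (lindenbaumChain Γ m k)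

def LindenbaumInv (Γ : Set ZFForm) (s : Set ZFForm × ℕ) : Prop :=
  Γ ⊆ s.1 ∧ (∀ F ∈ s.1, InLang (i + 1) F ∧ VarsWithin i s.2 F) ∧ VarsWithin i s.2 B ∧
    ¬ Derives Ax s.1 B

variable {Ax i B}

theorem subset_lindenbaumStep (G : ZFForm) (s : Set ZFForm × ℕ) :
    s.1 ⊆ (lindenbaumStep Ax i B G s).1 := by
  unfold lindenbaumStep
  split_ifs
  · exact fun F hF => Or.inl (Set.mem_insert_of_mem _ hF)
  · exact le_rfl

theorem mem_lindenbaumStep (G : ZFForm) (s : Set ZFForm × ℕ)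
    (h : InLang (i + 1) G ∧ ¬ Derives Ax (insert G s.1) B) :
    insert G s.1 ∪ henkinWitness (henkinConst (i + 1) (max s.2 G.varBound)) G ⊆
      (lindenbaumStep Ax i B G s).1 := by
  simp [lindenbaumStep, h]

theorem LindenbaumInv.step {Γ : Set ZFForm} {s : Set ZFForm × ℕ} (hs : LindenbaumInv Ax i B Γ s)
    (G : ZFForm) : LindenbaumInv Ax i B Γ (lindenbaumStep Ax i B G s) := by
  obtain ⟨hΓ, hΔ, hB, hnd⟩ := hs
  unfold lindenbaumStep
  split_ifs with h
  swap; · exact ⟨hΓ, hΔ, hB, hnd⟩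
  set c := henkinConst (i + 1) (max s.2 G.varBound)
  have hmc : max s.2 G.varBound < c := lt_henkinConst _ _
  have hG : VarsWithin i (c + 1) G := fun v hv => Or.inr (by have := ZFForm.lt_varBound hv; omega)
  refine ⟨hΓ.trans fun F hF => Or.inl (Set.mem_insert_of_mem _ hF), ?_, hB.mono (by omega), ?_⟩
  · rintro F ((rfl | hF) | hF)
    · exact ⟨h.1, hG⟩
    · exact ⟨(hΔ F hF).1, (hΔ F hF).2.mono (by omega)⟩
    · obtain ⟨x, A, rfl, rfl⟩ := mem_henkinWitness.mp hF
      refine ⟨InLang.renameFree h.1.1.2 (fun v hv hvx => h.1.2 v (Finset.mem_erase.mpr ⟨hvx, hv⟩))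
        (isConst_henkinConst _ _), fun v hv => ?_⟩
      rcases ZFForm.mem_FV_renameFree hv with rfl | ⟨hv, hvx⟩
      · exact Or.inr (Nat.lt_succ_self _)
      · exact hG v (Finset.mem_erase.mpr ⟨hvx, hv⟩)
  · refine not_derives_union_henkinWitness h.1.1 (not_even_henkinConst _ _) ?_
      (hB.notMem (by omega)) h.2
    rintro F (rfl | hF) hcF
    · have := ZFForm.lt_varBound hcF; omega
    · exact (hΔ F hF).2.notMem (by omega) hcF

theorem lindenbaumInv_chain {Γ : Set ZFForm} {m : ℕ} (hΓ : ∀ F ∈ Γ, InLang i F)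
    (hB : VarsWithin i m B) (hnd : ¬ Derives Ax Γ B) (k : ℕ) :
    LindenbaumInv Ax i B Γ (lindenbaumChain Ax i B Γ m k) := by
  induction k with
  | zero =>
    exact ⟨le_rfl, fun F hF => ⟨(hΓ F hF).mono (Nat.le_succ i),
      fun v hv => Or.inl ((hΓ F hF).2 v hv)⟩, hB, hnd⟩
  | succ k ih => exact ih.step _

theorem monotone_lindenbaumChain (Γ : Set ZFForm) (m : ℕ) :
    Monotone fun k => (lindenbaumChain Ax i B Γ m k).1 :=
  monotone_nat_of_le_succ fun _ => subset_lindenbaumStep _ _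

end Lindenbaum

theorem Derives.exists_of_iUnion {Ax : Set ZFForm} {D : ℕ → Set ZFForm} (hD : Monotone D)
    {A : ZFForm} (h : Derives Ax (⋃ k, D k) A) : ∃ k, Derives Ax (D k) A := by
  obtain ⟨L, hL, d⟩ := h
  suffices ∃ k, ∀ x ∈ L, x ∈ D k from this.imp fun k hk => ⟨L, hk, d⟩
  clear d
  induction L with
  | nil => exact ⟨0, by simp⟩
  | cons F L ih =>
    obtain ⟨k₁, hk₁⟩ := ih fun x hx => hL x (List.mem_cons_of_mem _ hx)
    obtain ⟨k₂, hk₂⟩ := Set.mem_iUnion.mp (hL F List.mem_cons_self)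
    refine ⟨max k₁ k₂, fun x hx => ?_⟩
    rcases List.mem_cons.mp hx with rfl | hx
    · exact hD (le_max_right k₁ k₂) hk₂
    · exact hD (le_max_left k₁ k₂) (hk₁ x hx)

structure IsHenkinTheory (Ax : Set ZFForm) (i : ℕ) (Δ : Set ZFForm) : Prop where
  inLang : ∀ A ∈ Δ, InLang i A
  closed : ∀ A, InLang i A → Derives Ax Δ A → A ∈ Δ
  prime : ∀ X Y, X.or Y ∈ Δ → X ∈ Δ ∨ Y ∈ Δ
  henkin : ∀ x A, ZFForm.ex x A ∈ Δ → ∃ c, IsConst i c ∧ A.renameFree x c ∈ Δ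
  bot_notMem : ZFForm.bot ∉ Δ

theorem lindenbaum {Ax Γ : Set ZFForm} {i m : ℕ} {B : ZFForm} (hΓ : ∀ F ∈ Γ, InLang i F)
    (hB : VarsWithin i m B) (hnd : ¬ Derives Ax Γ B) :
    ∃ Δ, Γ ⊆ Δ ∧ B ∉ Δ ∧ IsHenkinTheory Ax (i + 1) Δ := by
  set D := fun k => (lindenbaumChain Ax i B Γ m k).1
  have hinv := lindenbaumInv_chain hΓ hB hnd
  have hsub : ∀ k, D k ⊆ ⋃ k, D k := Set.subset_iUnion D
  have hnd' : ¬ Derives Ax (⋃ k, D k) B := fun h =>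
    let ⟨k, hk⟩ := h.exists_of_iUnion (monotone_lindenbaumChain Γ m); (hinv k).2.2.2 hk
  have hInLang : ∀ F ∈ ⋃ k, D k, InLang (i + 1) F := fun F hF =>
    let ⟨k, hk⟩ := Set.mem_iUnion.mp hF; ((hinv k).2.1 F hk).1
  -- `G` is examined at stage `G.code + 1`
  have hadd : ∀ G, InLang (i + 1) G → ¬ Derives Ax (insert G (⋃ k, D k)) B →
      insert G (D G.code) ∪ henkinWitness (henkinConst (i + 1)
        (max (lindenbaumChain Ax i B Γ m G.code).2 G.varBound)) G ⊆ ⋃ k, D k := by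
    intro G hG hGnd
    have h := mem_lindenbaumStep G _
      ⟨hG, fun hd => hGnd (hd.mono (Set.insert_subset_insert (hsub G.code)))⟩
    have e : D (G.code + 1) = (lindenbaumStep Ax i B G (lindenbaumChain Ax i B Γ m G.code)).1 := by
      simp only [D, lindenbaumChain, ZFForm.enum_code]
    exact h.trans (e ▸ hsub (G.code + 1))
  have hmax : ∀ G, InLang (i + 1) G → G ∉ ⋃ k, D k → Derives Ax (insert G (⋃ k, D k)) B :=
    fun G hG hGD => by_contra fun h => hGD (hadd G hG h (Or.inl (Set.mem_insert _ _)))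
  refine ⟨⋃ k, D k, hsub 0, fun h => hnd' (.hyp h), ⟨hInLang, ?_, ?_, ?_, ?_⟩⟩
  · exact fun G hG hd => by_contra fun h => hnd' (hd.cut (hmax G hG h))
  · intro X Y hXY
    have h := hInLang _ hXY
    have hX : InLang (i + 1) X := ⟨h.1.1, fun v hv => h.2 v (Finset.mem_union_left _ hv)⟩
    have hY : InLang (i + 1) Y := ⟨h.1.2, fun v hv => h.2 v (Finset.mem_union_right _ hv)⟩
    by_contra! hn
    exact hnd' (Derives.orE (.hyp hXY) (hmax X hX hn.1) (hmax Y hY hn.2))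
  · intro x A hex
    refine ⟨_, isConst_henkinConst _ _, hadd _ (hInLang _ hex) ?_ (Or.inr rfl)⟩
    rwa [Set.insert_eq_of_mem hex]
  · exact fun h => hnd' (Derives.of_imp ZFProv.botE (.hyp h))

/-! ### The canonical model -/

/-- Henkin constants are free for the bound variables of these axioms. -/
def evenAxioms (T : Set ZFForm) : Set ZFForm := ZFForm.toEvenBinders '' T ∪ zfEqAxioms

structure CanonWorld (T : Set ZFForm) where
  level : ℕ
  theory : Set ZFForm
  isHenkin : IsHenkinTheory (evenAxioms T) level theory

namespace CanonWorld

variable {T : Set ZFForm} (w : CanonWorld T) {a b c : ℕ}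

theorem ext' {w w' : CanonWorld T} (h₁ : w.level = w'.level) (h₂ : w.theory = w'.theory) :
    w = w' := by
  cases w; cases w'; simp_all

theorem exists_extension {Γ : Set ZFForm} {B : ZFForm} {i m : ℕ} (hΓ : ∀ F ∈ Γ, InLang i F)
    (hB : VarsWithin i m B) (hnd : ¬ Derives (evenAxioms T) Γ B) :
    ∃ w : CanonWorld T, w.level = i + 1 ∧ Γ ⊆ w.theory ∧ B ∉ w.theory :=
  let ⟨Δ, hΓΔ, hBΔ, hΔ⟩ := lindenbaum hΓ hB hnd
  ⟨⟨i + 1, Δ, hΔ⟩, rfl, hΓΔ, hBΔ⟩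

theorem mem_of_derives {A : ZFForm} (hA : InLang w.level A)
    (h : Derives (evenAxioms T) w.theory A) : A ∈ w.theory :=
  w.isHenkin.closed A hA h

theorem isConst_of_mem {A : ZFForm} (hA : A ∈ w.theory) {v : ℕ} (hv : v ∈ A.FV) :
    IsConst w.level v :=
  (w.isHenkin.inLang A hA).2 v hv

theorem eq_mem_of_isConst (ha : IsConst w.level a) : ZFForm.eq a a ∈ w.theory :=
  w.mem_of_derives ⟨trivial, by simpa [ZFForm.FV] using ha⟩
    (.of_prov (.axm (Or.inr (Or.inl ⟨a, rfl⟩))))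

theorem eq_symm (h : ZFForm.eq a b ∈ w.theory) : ZFForm.eq b a ∈ w.theory :=
  w.mem_of_derives ⟨trivial, by simp [ZFForm.FV, w.isConst_of_mem h (v := a) (by simp [ZFForm.FV]),
      w.isConst_of_mem h (v := b) (by simp [ZFForm.FV])]⟩
    (.of_imp (.axm (Or.inr (Or.inr (Or.inl ⟨a, b, rfl⟩)))) (.hyp h))

theorem eq_trans (h₁ : ZFForm.eq a b ∈ w.theory) (h₂ : ZFForm.eq b c ∈ w.theory) :
    ZFForm.eq a c ∈ w.theory :=
  w.mem_of_derives ⟨trivial, by simp [ZFForm.FV, w.isConst_of_mem h₁ (v := a) (by simp [ZFForm.FV]),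
      w.isConst_of_mem h₂ (v := c) (by simp [ZFForm.FV])]⟩
    (.mp (.of_imp (.axm (Or.inr (Or.inr (Or.inr (Or.inl ⟨a, b, c, rfl⟩))))) (.hyp h₁)) (.hyp h₂))

theorem mem_congr_left {a' : ℕ} (h : ZFForm.eq a a' ∈ w.theory) (hm : ZFForm.mem a b ∈ w.theory) :
    ZFForm.mem a' b ∈ w.theory :=
  w.mem_of_derives ⟨trivial, by simp [ZFForm.FV, w.isConst_of_mem h (v := a') (by simp [ZFForm.FV]),
      w.isConst_of_mem hm (v := b) (by simp [ZFForm.FV])]⟩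
    (.mp (.of_imp (.axm (Or.inr (Or.inr (Or.inr (Or.inr (Or.inl ⟨a, a', b, rfl⟩)))))) (.hyp h))
      (.hyp hm))

theorem mem_congr_right {b' : ℕ} (h : ZFForm.eq b b' ∈ w.theory) (hm : ZFForm.mem a b ∈ w.theory) :
    ZFForm.mem a b' ∈ w.theory :=
  w.mem_of_derives ⟨trivial, by simp [ZFForm.FV, w.isConst_of_mem h (v := b') (by simp [ZFForm.FV]),
      w.isConst_of_mem hm (v := a) (by simp [ZFForm.FV])]⟩
    (.mp (.of_imp (.axm (Or.inr (Or.inr (Or.inr (Or.inr (Or.inr ⟨b, b', a, rfl⟩)))))) (.hyp h))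
      (.hyp hm))

/-- The domain of `w`: its constants modulo provable equality. -/
instance setoid : Setoid {v // IsConst w.level v} where
  r a b := ZFForm.eq a.1 b.1 ∈ w.theory
  iseqv := ⟨fun a => w.eq_mem_of_isConst a.2, w.eq_symm, w.eq_trans⟩

end CanonWorld

noncomputable def canonModel (T : Set ZFForm) : SetKripkeModel where
  World := CanonWorld T
  le w w' := w.level ≤ w'.level ∧ w.theory ⊆ w'.theory
  le_refl w := ⟨le_rfl, subset_rfl⟩
  le_trans h₁ h₂ := ⟨h₁.1.trans h₂.1, h₁.2.trans h₂.2⟩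
  le_antisymm h₁ h₂ := CanonWorld.ext' (le_antisymm h₁.1 h₂.1) (subset_antisymm h₁.2 h₂.2)
  Dom w := Quotient w.setoid
  dne _ := ⟨⟦⟨henkinConst 0 0, isConst_henkinConst 0 0 |>.mono (Nat.zero_le _)⟩⟧⟩
  tr h := Quotient.map (fun a => ⟨a.1, a.2.mono h.1⟩) fun _ _ hab => h.2 hab
  tr_refl _ _ x := by induction x using Quotient.ind; rfl
  tr_trans _ _ _ x := by induction x using Quotient.ind; rfl
  mem w := Quotient.lift₂ (fun a b => ZFForm.mem a.1 b.1 ∈ w.theory) fun _ _ _ _ ha hb =>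
    propext ⟨fun h => w.mem_congr_right hb (w.mem_congr_left ha h),
      fun h => w.mem_congr_right (w.eq_symm hb) (w.mem_congr_left (w.eq_symm ha) h)⟩
  mem_mono h x y := by
    induction x using Quotient.ind
    induction y using Quotient.ind
    exact fun hm => h.2 hm

open Classical in
/-- Each constant denotes itself; the value at other variables is never used. -/
noncomputable def canonAssignment {T : Set ZFForm} (w : CanonWorld T) : ℕ → (canonModel T).Dom w :=
  fun k => if h : IsConst w.level k then ⟦⟨k, h⟩⟧ else ⟦⟨henkinConst 0 0,
    isConst_henkinConst 0 0 |>.mono (Nat.zero_le _)⟩⟧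

namespace CanonWorld

variable {T : Set ZFForm}

theorem canonAssignment_of_isConst {w : CanonWorld T} {k : ℕ} (hk : IsConst w.level k) :
    canonAssignment w k = ⟦⟨k, hk⟩⟧ :=
  dif_pos hk

theorem tr_canonAssignment {w w' : CanonWorld T} (h : (canonModel T).le w w') {k : ℕ}
    (hk : IsConst w.level k) :
    (canonModel T).tr h (canonAssignment w k) = canonAssignment w' k := by
  rw [canonAssignment_of_isConst hk, canonAssignment_of_isConst (hk.mono h.1)]
  rfl

end CanonWorld

/-! ### The truth lemma -/

theorem InLang.of_binary {i : ℕ} {A B C : ZFForm} (hC : InLang i C)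
    (hE : C.HasEvenBinders = (A.HasEvenBinders ∧ B.HasEvenBinders)) (hFV : C.FV = A.FV ∪ B.FV) :
    InLang i A ∧ InLang i B :=
  ⟨⟨(hE ▸ hC.1).1, fun v hv => hC.2 v (hFV ▸ Finset.mem_union_left _ hv)⟩,
    ⟨(hE ▸ hC.1).2, fun v hv => hC.2 v (hFV ▸ Finset.mem_union_right _ hv)⟩⟩

namespace CanonWorld

variable {T : Set ZFForm}

theorem zforce_tr_canonAssignment {w w' : CanonWorld T} (hle : (canonModel T).le w w')
    {A : ZFForm} (hA : ∀ k ∈ A.FV, IsConst w.level k) :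
    zforce (canonModel T) A w' (fun n => (canonModel T).tr hle (canonAssignment w n)) ↔
      zforce (canonModel T) A w' (canonAssignment w') :=
  zforce_congr A fun k hk => tr_canonAssignment hle (hA k hk)

theorem zforce_update_canonAssignment {w w' : CanonWorld T} (hle : (canonModel T).le w w')
    {A : ZFForm} {x c : ℕ} (hc : IsConst w'.level c)
    (hA : ∀ k ∈ A.FV, k ≠ x → IsConst w.level k) (hff : A.freeFor c x) :
    zforce (canonModel T) A w'
        (Function.update (fun n => (canonModel T).tr hle (canonAssignment w n)) x ⟦⟨c, hc⟩⟧) ↔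
      zforce (canonModel T) (A.renameFree x c) w' (canonAssignment w') := by
  refine Iff.trans ?_ (zforce_renameFree (M := canonModel T) hff (canonAssignment w')).symm
  refine zforce_congr A fun k hk => ?_
  by_cases hkx : k = x
  · subst hkx
    simp only [Function.update_self]
    rw [canonAssignment_of_isConst hc]
    exact Function.update_self _ _ _
  · exact (Function.update_of_ne hkx _ _).trans
      ((tr_canonAssignment hle (hA k hk hkx)).trans (Function.update_of_ne hkx _ _).symm)

end CanonWorld

open CanonWorld

def CanonTruth (T : Set ZFForm) (A : ZFForm) : Prop :=
  ∀ w : CanonWorld T, InLang w.level A →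
    (zforce (canonModel T) A w (canonAssignment w) ↔ A ∈ w.theory)

section CanonTruth

variable {T : Set ZFForm} {A B : ZFForm} {x : ℕ}

theorem canonTruth_mem (i j : ℕ) : CanonTruth T (.mem i j) := fun w hA => by
  simp only [zforce, canonAssignment_of_isConst (hA.2 i (by simp [ZFForm.FV])),
    canonAssignment_of_isConst (hA.2 j (by simp [ZFForm.FV]))]
  rfl

theorem canonTruth_eq (i j : ℕ) : CanonTruth T (.eq i j) := fun w hA => by
  simp only [zforce, canonAssignment_of_isConst (hA.2 i (by simp [ZFForm.FV])),
    canonAssignment_of_isConst (hA.2 j (by simp [ZFForm.FV]))]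
  exact Quotient.eq

theorem canonTruth_bot : CanonTruth T .bot :=
  fun w _ => ⟨False.elim, fun h => w.isHenkin.bot_notMem h⟩

theorem canonTruth_top : CanonTruth T .top :=
  fun w hA => ⟨fun _ => w.mem_of_derives hA (.of_prov .topI), fun _ => trivial⟩

theorem canonTruth_and (ihA : CanonTruth T A) (ihB : CanonTruth T B) :
    CanonTruth T (A.and B) := fun w h => by
  obtain ⟨hA, hB⟩ := h.of_binary rfl rfl
  simp only [zforce, ihA w hA, ihB w hB]
  exact ⟨fun h' => w.mem_of_derives h (.andI (.hyp h'.1) (.hyp h'.2)),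
    fun h' => ⟨w.mem_of_derives hA (.of_imp .andE1 (.hyp h')),
      w.mem_of_derives hB (.of_imp .andE2 (.hyp h'))⟩⟩

theorem canonTruth_or (ihA : CanonTruth T A) (ihB : CanonTruth T B) :
    CanonTruth T (A.or B) := fun w h => by
  obtain ⟨hA, hB⟩ := h.of_binary rfl rfl
  simp only [zforce, ihA w hA, ihB w hB]
  exact ⟨fun h' => h'.elim (fun h' => w.mem_of_derives h (.of_imp .orI1 (.hyp h')))
    (fun h' => w.mem_of_derives h (.of_imp .orI2 (.hyp h'))), w.isHenkin.prime A B⟩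

theorem canonTruth_imp (ihA : CanonTruth T A) (ihB : CanonTruth T B) :
    CanonTruth T (A.imp B) := fun w h => by
  obtain ⟨hA, hB⟩ := h.of_binary rfl rfl
  constructor
  · intro hz
    by_contra hmem
    have hΓ : ∀ F ∈ insert A w.theory, InLang w.level F :=
      fun F hF => hF.elim (· ▸ hA) (w.isHenkin.inLang F)
    obtain ⟨w', hlvl, hsub, hB'⟩ := exists_extension hΓ (m := 0) (fun v hv => Or.inl (hB.2 v hv))
      fun hd => hmem (w.mem_of_derives h hd.impI)
    have hle : (canonModel T).le w w' := ⟨by omega, (Set.subset_insert _ _).trans hsub⟩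
    have hzA := (zforce_tr_canonAssignment hle hA.2).mpr
      ((ihA w' (hA.mono hle.1)).mpr (hsub (Set.mem_insert _ _)))
    exact hB' ((ihB w' (hB.mono hle.1)).mp
      ((zforce_tr_canonAssignment hle hB.2).mp (hz w' hle hzA)))
  · intro hmem w' hle hzA
    have hA' := (ihA w' (hA.mono hle.1)).mp ((zforce_tr_canonAssignment hle hA.2).mp hzA)
    exact (zforce_tr_canonAssignment hle hB.2).mpr ((ihB w' (hB.mono hle.1)).mpr
      (w'.mem_of_derives (hB.mono hle.1) (.mp (.hyp (hle.2 hmem)) (.hyp hA'))))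

theorem canonTruth_all (ih : ∀ c, CanonTruth T (A.renameFree x c)) :
    CanonTruth T (.all x A) := fun w h => by
  have hFV : ∀ k ∈ A.FV, k ≠ x → IsConst w.level k :=
    fun k hk hkx => h.2 k (Finset.mem_erase.mpr ⟨hkx, hk⟩)
  constructor
  · intro hz
    by_contra hmem
    set c := henkinConst (w.level + 1) 0
    have hc : ¬ Even c := not_even_henkinConst _ _
    have hff : A.freeFor c x := ZFForm.freeFor_of_not_even h.1.2 hc
    have hcA : c ∉ A.FV := fun hcA => not_isConst_henkinConst_succ
      (hFV c hcA fun e => hc (e ▸ h.1.1))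
    have hΓ : ∀ F ∈ w.theory, c ∉ F.FV :=
      fun F hF hcF => not_isConst_henkinConst_succ (w.isConst_of_mem hF hcF)
    obtain ⟨w', hlvl, hsub, hB'⟩ := exists_extension w.isHenkin.inLang (m := c + 1)
      (fun v hv => (ZFForm.mem_FV_renameFree hv).elim (fun e => Or.inr (by omega))
        fun hv => Or.inl (hFV v hv.1 hv.2))
      fun hd => hmem (w.mem_of_derives h (hd.all_intro hcA hff hΓ))
    have hle : (canonModel T).le w w' := ⟨by omega, hsub⟩
    have hcw' : IsConst w'.level c := hlvl ▸ isConst_henkinConst _ _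
    have hAc := InLang.renameFree h.1.2 (fun v hv hvx => (hFV v hv hvx).mono hle.1) hcw'
    exact hB' ((ih c w' hAc).mp
      ((zforce_update_canonAssignment hle hcw' hFV hff).mp (hz w' hle ⟦⟨c, hcw'⟩⟧)))
  · intro hmem w' hle d
    obtain ⟨⟨c, hc⟩, rfl⟩ := Quotient.exists_rep d
    have hff : A.freeFor c x := ZFForm.freeFor_of_not_even h.1.2 hc.not_even
    have hAc := InLang.renameFree h.1.2 (fun v hv hvx => (hFV v hv hvx).mono hle.1) hc
    exact (zforce_update_canonAssignment hle hc hFV hff).mpr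
      ((ih c w' hAc).mpr (w'.mem_of_derives hAc (.of_imp (.allE hff) (.hyp (hle.2 hmem)))))

theorem canonTruth_ex (ih : ∀ c, CanonTruth T (A.renameFree x c)) :
    CanonTruth T (.ex x A) := fun w h => by
  have hFV : ∀ k ∈ A.FV, k ≠ x → IsConst w.level k :=
    fun k hk hkx => h.2 k (Finset.mem_erase.mpr ⟨hkx, hk⟩)
  have e : (fun n => (canonModel T).tr ((canonModel T).le_refl w) (canonAssignment w n)) =
      canonAssignment w := (canonModel T).tr_comp_refl _
  have key : ∀ c (hc : IsConst w.level c),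
      zforce (canonModel T) A w (Function.update (canonAssignment w) x ⟦⟨c, hc⟩⟧) ↔
        A.renameFree x c ∈ w.theory := fun c hc => by
    rw [← ih c w (InLang.renameFree h.1.2 hFV hc),
      ← zforce_update_canonAssignment ((canonModel T).le_refl w) hc hFV
        (ZFForm.freeFor_of_not_even h.1.2 hc.not_even), e]
  constructor
  · rintro ⟨d, hd⟩
    obtain ⟨⟨c, hc⟩, rfl⟩ := Quotient.exists_rep d
    exact w.mem_of_derives h
      (.of_imp (.exI (ZFForm.freeFor_of_not_even h.1.2 hc.not_even)) (.hyp ((key c hc).mp hd)))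
  · intro hmem
    obtain ⟨c, hc, hAc⟩ := w.isHenkin.henkin x A hmem
    exact ⟨_, (key c hc).mpr hAc⟩

theorem canonTruth : ∀ A, CanonTruth T A
  | .mem i j => canonTruth_mem i j
  | .eq i j => canonTruth_eq i j
  | .bot => canonTruth_bot
  | .top => canonTruth_top
  | .and A B => canonTruth_and (canonTruth A) (canonTruth B)
  | .or A B => canonTruth_or (canonTruth A) (canonTruth B)
  | .imp A B => canonTruth_imp (canonTruth A) (canonTruth B)
  | .all x A => canonTruth_all fun c => canonTruth (A.renameFree x c)
  | .ex x A => canonTruth_ex fun c => canonTruth (A.renameFree x c)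
termination_by A => A.size
decreasing_by all_goals simp [ZFForm.size, ZFForm.size_renameFree]

end CanonTruth

/-! ### Completeness -/

section Completeness

variable {T : Set ZFForm}

theorem thyProv_of_evenAxioms {X : ZFForm} (h : ZFProv (evenAxioms T) X) : thyProv T X :=
  h.of_axioms <| by
    rintro B (⟨φ, hφ, rfl⟩ | hB)
    · exact (ZFProv.toEvenBinders_equiv φ).1.mp (.axm (Or.inl hφ))
    · exact .axm (Or.inr hB)

theorem zforce_toEvenBinders_iff {M : SetKripkeModel} {A : ZFForm} {v : M.World}
    (ρ : ℕ → M.Dom v) : zforce M A.toEvenBinders v ρ ↔ zforce M A v ρ :=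
  have h (φ) (hφ : ZFProv zfEqAxioms φ) : Forces M φ :=
    soundness hφ fun _ => forces_of_mem_zfEqAxioms
  ⟨zforce_mp (h _ (ZFProv.toEvenBinders_equiv A).2 v ρ),
    zforce_mp (h _ (ZFProv.toEvenBinders_equiv A).1 v ρ)⟩

theorem InLang.toEvenBinders_of_isSentence {A : ZFForm} (hA : A.IsSentence) (i : ℕ) :
    InLang i A.toEvenBinders :=
  ⟨A.hasEvenBinders_toEvenBinders, by simp [A.FV_toEvenBinders, show A.FV = ∅ from hA]⟩

theorem exists_canonWorld_not_zforce {ψ : ZFForm} (hψ : ψ.IsSentence) (hnp : ¬ thyProv T ψ) :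
    ∃ w : CanonWorld T, ¬ zforce (canonModel T) ψ w (canonAssignment w) := by
  have hnd : ¬ Derives (evenAxioms T) ∅ ψ.toEvenBinders := by
    rintro ⟨L, hL, d⟩
    obtain rfl : L = [] := List.eq_nil_iff_forall_not_mem.mpr hL
    exact hnp ((ZFProv.toEvenBinders_equiv ψ).2.mp (thyProv_of_evenAxioms d))
  obtain ⟨w, -, -, hw⟩ := CanonWorld.exists_extension (i := 0) (m := 0) (by simp)
    (fun v hv => Or.inl ((InLang.toEvenBinders_of_isSentence hψ 0).2 v hv)) hnd
  refine ⟨w, fun hz => hw ?_⟩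
  exact (canonTruth _ w (InLang.toEvenBinders_of_isSentence hψ _)).mp
    ((zforce_toEvenBinders_iff _).mpr hz)

theorem exists_canonWorld_not_zforce_of_imp {X Y : ZFForm} (hX : X.IsSentence)
    (hY : Y.IsSentence) (hnp : ¬ thyProv T (X.imp Y)) :
    ∃ w : CanonWorld T,
      (∀ ρ, zforce (canonModel T) X w ρ) ∧ ∀ ρ, ¬ zforce (canonModel T) Y w ρ := by
  obtain ⟨w, hw⟩ := exists_canonWorld_not_zforce (by simp [ZFForm.IsSentence, ZFForm.FV,
    show X.FV = ∅ from hX, show Y.FV = ∅ from hY]) hnp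
  simp only [zforce, Classical.not_imp, not_forall] at hw
  obtain ⟨u, hle, hXu, hYu⟩ := hw
  exact ⟨u, fun ρ => (zforce_sentence_iff hX _ ρ).mp hXu,
    fun ρ h => hYu ((zforce_sentence_iff hY ρ _).mp h)⟩

theorem canonModel_forces (hsent : ∀ φ ∈ T, φ.IsSentence) : ∀ φ ∈ T, Forces (canonModel T) φ :=
  fun φ hφ w ρ => by
    have hφ' := InLang.toEvenBinders_of_isSentence (hsent φ hφ) w.level
    have hmem : φ.toEvenBinders ∈ w.theory :=
      w.mem_of_derives hφ' (.of_prov (.axm (Or.inl ⟨φ, hφ, rfl⟩)))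
    exact (zforce_sentence_iff (hsent φ hφ) _ ρ).mp
      ((zforce_toEvenBinders_iff _).mp ((canonTruth _ w hφ').mpr hmem))

end Completeness

/-! ### Models with a new root -/

def SetKripkeModel.restrict (M : SetKripkeModel) (S : Set M.World) : SetKripkeModel where
  World := S
  le a b := M.le a.1 b.1
  le_refl a := M.le_refl a.1
  le_trans := M.le_trans
  le_antisymm h₁ h₂ := Subtype.ext (M.le_antisymm h₁ h₂)
  Dom a := M.Dom a.1
  dne a := M.dne a.1
  tr := M.tr
  tr_refl a := M.tr_refl a.1
  tr_trans := M.tr_trans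
  mem a := M.mem a.1
  mem_mono := M.mem_mono

theorem zforce_restrict_iff {M : SetKripkeModel} {S : Set M.World}
    (hS : ∀ {v w : M.World}, M.le v w → v ∈ S → w ∈ S) (A : ZFForm)
    (a : (M.restrict S).World) (ρ : ℕ → M.Dom a.1) :
    zforce (M.restrict S) A a ρ ↔ zforce M A a.1 ρ := by
  induction A generalizing a with
  | mem | eq | bot | top => exact Iff.rfl
  | and A B ihA ihB | or A B ihA ihB => simp only [zforce, ihA, ihB]
  | imp A B ihA ihB =>
    simp only [zforce]
    constructor
    · exact fun H w hw hA => (ihB _ _).mp (H ⟨w, hS hw a.2⟩ hw ((ihA _ _).mpr hA))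
    · exact fun H b hb hA => (ihB _ _).mpr (H b.1 hb ((ihA _ _).mp hA))
  | all z A ih =>
    simp only [zforce]
    constructor
    · exact fun H w hw d => (ih _ _).mp (H ⟨w, hS hw a.2⟩ hw d)
    · exact fun H b hb d => (ih _ _).mpr (H b.1 hb d)
  | ex z A ih => exact exists_congr fun d => ih a _

namespace RootExtension

variable {M : SetKripkeModel} (E : RootExtension M)

theorem zforce_some_iff (A : ZFForm) (v : M.World) (ρ : ℕ → M.Dom v) :
    zforce E.toModel A (some v) ρ ↔ zforce M A v ρ := by
  induction A generalizing v with
  | mem | eq | bot | top => exact Iff.rfl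
  | and A B ihA ihB | or A B ihA ihB => simp only [zforce, ihA, ihB]
  | imp A B ihA ihB =>
    simp only [zforce]
    constructor
    · exact fun H w hw hA => (ihB _ _).mp (H (some w) hw ((ihA _ _).mpr hA))
    · rintro H (_ | w) hw hA
      · exact hw.elim
      · exact (ihB _ _).mpr (H w hw ((ihA _ _).mp hA))
  | all z A ih =>
    simp only [zforce]
    constructor
    · exact fun H w hw d => (ih _ _).mp (H (some w) hw d)
    · rintro H (_ | w) hw d
      · exact hw.elim
      · exact (ih _ _).mpr (H w hw d)
  | ex z A ih => exact exists_congr fun d => ih v _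

theorem zforce_of_zforce_root {A : ZFForm} (hA : A.IsSentence) {ρ : ℕ → E.RDom}
    (h : zforce E.toModel A none ρ) (v : M.World) (ρ' : ℕ → M.Dom v) : zforce M A v ρ' :=
  (zforce_sentence_iff hA _ _).mp ((E.zforce_some_iff A v _).mp
    (zforce_mono (M := E.toModel) A (show E.toModel.le none (some v) from trivial) h))

noncomputable def rootAssignment : ℕ → E.toModel.Dom none := fun _ => Classical.choice E.rdne

end RootExtension

noncomputable def canonCone {T : Set ZFForm} {ι : Type} (u : ι → CanonWorld T) : SetKripkeModel :=
  (canonModel T).restrict {v | ∃ j, (canonModel T).le (u j) v}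

theorem zforce_canonCone_iff {T : Set ZFForm} {ι : Type} (u : ι → CanonWorld T) (A : ZFForm)
    (a : (canonCone u).World) (ρ : ℕ → (canonModel T).Dom a.1) :
    zforce (canonCone u) A a ρ ↔ zforce (canonModel T) A a.1 ρ :=
  zforce_restrict_iff (S := {v | ∃ j, (canonModel T).le (u j) v})
    (fun hvw ⟨j, hj⟩ => ⟨j, (canonModel T).le_trans hj hvw⟩) A a ρ

theorem exists_rootExtension_canonCone {T : Set ZFForm} (hsent : ∀ φ ∈ T, φ.IsSentence)
    (hext : Extensible T) {ι : Type} (u : ι → CanonWorld T) :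
    ∃ E : RootExtension (canonCone u), ∀ φ, thyProv T φ → Forces E.toModel φ := by
  obtain ⟨E, hE⟩ := hext (canonCone u) fun φ hφ a ρ =>
    (zforce_canonCone_iff u φ a ρ).mpr (canonModel_forces hsent φ (by simpa using hφ) a.1 ρ)
  exact ⟨E, fun φ h => soundness_thyProv h hE⟩

/-! ### Visser's rules -/

theorem substZ_isSentence {s : ℕ → ZFForm} (hs : ∀ k, (s k).IsSentence) (P : PropForm) :
    (substZ s P).IsSentence := by
  induction P with
  | var k => exact hs k
  | bot | top => rfl
  | and P Q ihP ihQ | or P Q ihP ihQ | imp P Q ihP ihQ =>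
    simp only [ZFForm.IsSentence, substZ, ZFForm.FV, Finset.union_eq_empty]
    exact ⟨ihP, ihQ⟩

theorem zforce_substZ_bigAnd {M : SetKripkeModel} {s : ℕ → ZFForm} (l : List PropForm)
    {v : M.World} (ρ : ℕ → M.Dom v) :
    zforce M (substZ s (bigAnd l)) v ρ ↔ ∀ F ∈ l, zforce M (substZ s F) v ρ := by
  induction l with
  | nil => simp [bigAnd, substZ, zforce]
  | cons F l ih => simp only [List.forall_mem_cons, ← ih]; rfl

theorem ZFProv.substZ_imp_bigOr {Ax : Set ZFForm} {s : ℕ → ZFForm} {F : PropForm}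
    {l : List PropForm} (h : F ∈ l) : ZFProv Ax ((substZ s F).imp (substZ s (bigOr l))) := by
  induction l with
  | nil => cases h
  | cons G l ih =>
    rcases List.mem_cons.mp h with rfl | h
    · exact orI1
    · exact trans (ih h) orI2

theorem thyProv_or_of_extensible {T : Set ZFForm} (hsent : ∀ φ ∈ T, φ.IsSentence)
    (hext : Extensible T) {X Y : ZFForm} (hX : X.IsSentence) (hY : Y.IsSentence)
    (h : thyProv T (X.or Y)) : thyProv T X ∨ thyProv T Y := by
  by_contra! hn
  obtain ⟨u₁, hu₁⟩ := exists_canonWorld_not_zforce hX hn.1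
  obtain ⟨u₂, hu₂⟩ := exists_canonWorld_not_zforce hY hn.2
  obtain ⟨E, hE⟩ := exists_rootExtension_canonCone hsent hext ![u₁, u₂]
  rcases hE _ h none E.rootAssignment with h₁ | h₂
  · exact hu₁ ((zforce_canonCone_iff _ _ _ _).mp
      (E.zforce_of_zforce_root hX h₁ ⟨u₁, 0, (canonModel T).le_refl _⟩ (canonAssignment u₁)))
  · exact hu₂ ((zforce_canonCone_iff _ _ _ _).mp
      (E.zforce_of_zforce_root hY h₂ ⟨u₂, 1, (canonModel T).le_refl _⟩ (canonAssignment u₂)))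

section Visser

variable {n : ℕ} {A : Fin (n + 2) → PropForm} {B : Fin n → PropForm} {s : ℕ → ZFForm}

theorem RootExtension.not_forces_visser {M : SetKripkeModel} (E : RootExtension M)
    (hs : ∀ k, (s k).IsSentence) (hX : ∀ v ρ, zforce M (substZ s (visserAnte n A B)) v ρ)
    (hA : ∀ j, ∃ v ρ, ¬ zforce M (substZ s (A j)) v ρ) :
    ¬ Forces E.toModel (substZ s ((visserAnte n A B).imp ((A ⟨n, by omega⟩).or
      (A ⟨n + 1, by omega⟩)))) := by
  intro h
  have hroot : ∀ j, ¬ zforce E.toModel (substZ s (A j)) none E.rootAssignment := fun j hj =>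
    let ⟨v, ρ, hv⟩ := hA j; hv (E.zforce_of_zforce_root (substZ_isSentence hs _) hj v ρ)
  by_cases hXr : zforce E.toModel (substZ s (visserAnte n A B)) none E.rootAssignment
  · exact (zforce_mp (h none _) hXr).elim (hroot _) (hroot _)
  -- the root fails some `A_i → B_i`; the world refuting it is neither the root nor an old world
  obtain ⟨_, hF, hi⟩ := not_forall₂.mp ((zforce_substZ_bigAnd _ _).not.mp hXr)
  obtain ⟨i, rfl⟩ := List.mem_ofFn.mp hF
  simp only [substZ, zforce, not_forall] at hi
  obtain ⟨_ | v, hle, hAi, hBi⟩ := hi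
  · exact hroot _ ((zforce_sentence_iff (substZ_isSentence hs _) _ _).mp hAi)
  · have himp := (zforce_substZ_bigAnd _ _).mp
      (hX v fun k => E.toModel.tr hle (E.rootAssignment k)) _ hF
    exact hBi ((E.zforce_some_iff _ v _).mpr
      (zforce_mp himp ((E.zforce_some_iff _ v _).mp hAi)))

theorem exists_thyProv_visser_of_extensible {T : Set ZFForm} (hsent : ∀ φ ∈ T, φ.IsSentence)
    (hext : Extensible T) (hs : ∀ k, (s k).IsSentence)
    (h : thyProv T (substZ s ((visserAnte n A B).imp ((A ⟨n, by omega⟩).or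
      (A ⟨n + 1, by omega⟩))))) :
    ∃ j, thyProv T (substZ s ((visserAnte n A B).imp (A j))) := by
  by_contra! hn
  choose u hXu hAu using fun j => exists_canonWorld_not_zforce_of_imp
    (substZ_isSentence hs _) (substZ_isSentence hs _) (hn j)
  obtain ⟨E, hE⟩ := exists_rootExtension_canonCone hsent hext u
  refine E.not_forces_visser hs (fun ⟨v, j, hj⟩ ρ => ?_)
    (fun j => ⟨⟨u j, j, (canonModel T).le_refl _⟩, canonAssignment (u j),
      (zforce_canonCone_iff u _ _ _).not.mpr (hAu j _)⟩) (hE _ h)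
  exact (zforce_canonCone_iff u _ _ _).mpr ((zforce_sentence_iff (substZ_isSentence hs _) _ _).mp
    (zforce_mono _ hj (hXu j (canonAssignment (u j)))))

end Visser

/-- If `T` is an extensible set theory (based on intuitionistic logic),
then all of Visser's rules `V_n` are admissible in `T`. -/
theorem visser_rules_admissible_of_extensible (T : Set ZFForm)
    (hsent : ∀ φ ∈ T, φ.IsSentence) (hext : Extensible T) :
    ∀ (n : ℕ) (A : Fin (n+2) → PropForm) (B : Fin n → PropForm) (C : PropForm),
      AdmZ (thyProv T) (visserPrem n A B C) (visserConc n A B C) := by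
  intro n A B C s hs hprem
  rcases thyProv_or_of_extensible hsent hext (substZ_isSentence hs _) (substZ_isSentence hs C)
    hprem with hP | hC
  · obtain ⟨j, hj⟩ := exists_thyProv_visser_of_extensible hsent hext hs hP
    exact ZFProv.orI1.mp ((ZFProv.substZ_imp_bigOr (List.mem_ofFn.mpr ⟨j, rfl⟩)).mp hj)
  · exact ZFProv.orI2.mp hC
end

section
/- Let ⊢ be a consequence relation for classical first-order logic CQC (having the same theorems as CQC) that satisfies C(x̄) ⊢ ∀x̄ C(x̄) for all formulas C. Then for every unifiable formula A and every formula B, if the rule A/B is admissible in CQC (A ⊢~_CQC B) then A ⊢ B. In other words, CQC is almost structurally complete: every admissible rule with unifiable premise is derivable. -/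
set_option autoImplicit false
set_option linter.unusedVariables false

/-! ## First-order formulas over a language of predicate symbols -/

/-- First-order formulas over a language `P`, where `P n` is the type of `n`-ary predicate
symbols; the terms are the variables `x_i` (represented by natural numbers). -/
inductive FOForm (P : ℕ → Type) : Type
  | pred : {n : ℕ} → P n → (Fin n → ℕ) → FOForm P
  | bot : FOForm P
  | top : FOForm P
  | and : FOForm P → FOForm P → FOForm P
  | or : FOForm P → FOForm P → FOForm P
  | imp : FOForm P → FOForm P → FOForm P
  | all : ℕ → FOForm P → FOForm P
  | ex : ℕ → FOForm P → FOForm P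

namespace FOForm
variable {P : ℕ → Type}

/-- Negation is defined by `¬A := A → ⊥`. -/
def neg (A : FOForm P) : FOForm P := A.imp .bot

/-- The free variables of a first-order formula. -/
def FV : FOForm P → Finset ℕ
  | .pred _ args => Finset.image args Finset.univ
  | .bot => ∅
  | .top => ∅
  | .and A B => A.FV ∪ B.FV
  | .or A B => A.FV ∪ B.FV
  | .imp A B => A.FV ∪ B.FV
  | .all x A => A.FV.erase x
  | .ex x A => A.FV.erase x

/-- Rename the free occurrences of the variable `x` to `y`. -/
def renameFree (x y : ℕ) : FOForm P → FOForm P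
  | .pred p args => .pred p (fun i => if args i = x then y else args i)
  | .bot => .bot
  | .top => .top
  | .and A B => .and (A.renameFree x y) (B.renameFree x y)
  | .or A B => .or (A.renameFree x y) (B.renameFree x y)
  | .imp A B => .imp (A.renameFree x y) (B.renameFree x y)
  | .all z A => if z = x then .all z A else .all z (A.renameFree x y)
  | .ex z A => if z = x then .ex z A else .ex z (A.renameFree x y)

/-- `y` is free for (substitutable for) `x`: no free occurrence of `x` lies in the scope
of a quantifier binding `y`. -/
def freeFor (y x : ℕ) : FOForm P → Prop
  | .pred _ _ => True
  | .bot => True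
  | .top => True
  | .and A B => freeFor y x A ∧ freeFor y x B
  | .or A B => freeFor y x A ∧ freeFor y x B
  | .imp A B => freeFor y x A ∧ freeFor y x B
  | .all z A => x ∉ (FOForm.all z A).FV ∨ (y ≠ z ∧ freeFor y x A)
  | .ex z A => x ∉ (FOForm.ex z A).FV ∨ (y ≠ z ∧ freeFor y x A)

end FOForm

/-- The language of pure first-order logic: countably many predicate symbols in every arity. -/
abbrev PureLang : ℕ → Type := fun _ => ℕ

/-- Formulas of pure first-order logic. -/
abbrev LForm := FOForm PureLang

/-- A substitution from the formulas of first-order logic to the formulas of a theory in the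
language `P`: it commutes with `⊥`, `⊤`, the connectives and the quantifiers, and (as it is
induced by an assignment sending each predicate symbol `R` to a formula whose number of free
variables is at most the arity of `R`) the free variables of the image of an atomic formula
`R(x_{i_1}, …, x_{i_n})` are among `x_{i_1}, …, x_{i_n}`. -/
structure FOSubst (P : ℕ → Type) where
  app : LForm → FOForm P
  map_bot : app .bot = .bot
  map_top : app .top = .top
  map_and : ∀ A B, app (A.and B) = (app A).and (app B)
  map_or : ∀ A B, app (A.or B) = (app A).or (app B)
  map_imp : ∀ A B, app (A.imp B) = (app A).imp (app B)
  map_all : ∀ x A, app (.all x A) = .all x (app A)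
  map_ex : ∀ x A, app (.ex x A) = .ex x (app A)
  fv_pred : ∀ {n : ℕ} (p : PureLang n) (args : Fin n → ℕ),
      (app (.pred p args)).FV ⊆ Finset.image args Finset.univ

/-- Substitution of formulas (of a theory in the language `P`) for propositional letters. -/
def substF {P : ℕ → Type} (s : ℕ → FOForm P) : PropForm → FOForm P
  | .var n => s n
  | .bot => .bot
  | .top => .top
  | .and A B => (substF s A).and (substF s B)
  | .or A B => (substF s A).or (substF s B)
  | .imp A B => (substF s A).imp (substF s B)

/-- The admissibility relation `Γ ⊢~ Δ` of a theory with provability predicate `Pr`: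
whenever all premises are provable under a substitution, so is one of the conclusions. -/
def FOAdm {P : ℕ → Type} (Pr : FOForm P → Prop) (Γ Δ : Finset LForm) : Prop :=
  ∀ σ : FOSubst P, (∀ A ∈ Γ, Pr (σ.app A)) → ∃ B ∈ Δ, Pr (σ.app B)

/-- `A` is a tautology of the theory: `⊤ ⊢~ A`. -/
def IsTautologyOf {P : ℕ → Type} (Pr : FOForm P → Prop) (A : LForm) : Prop :=
  FOAdm Pr {FOForm.top} {A}

/-- `A` is a tautology of the theory, in the equivalent form `T ⊢ σ(A)` for all `σ`. -/
def FOTaut {P : ℕ → Type} (Pr : FOForm P → Prop) (A : LForm) : Prop :=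
  ∀ σ : FOSubst P, Pr (σ.app A)

/-- The first-order logic `QL(T)` of a theory: all its first-order tautologies. -/
def QLogicOf {P : ℕ → Type} (Pr : FOForm P → Prop) : Set LForm := {A | FOTaut Pr A}

/-- The propositional logic `L(T)` of a theory: all its propositional tautologies.
(Propositional letters are nullary predicates, so they get substituted by sentences.) -/
def PLogicOf {P : ℕ → Type} (Pr : FOForm P → Prop) : Set PropForm :=
  {A | ∀ s : ℕ → FOForm P, (∀ n, (s n).FV = ∅) → Pr (substF s A)}

/-- The propositional logic of a theory, defined with substitutions of arbitrary
`T`-formulas for propositional letters. -/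
def PLogicOfF {P : ℕ → Type} (Pr : FOForm P → Prop) : Set PropForm :=
  {A | ∀ s : ℕ → FOForm P, Pr (substF s A)}

/-- The propositional rule `A / B` is admissible in the theory (substituting sentences). -/
def AdmThy {P : ℕ → Type} (Pr : FOForm P → Prop) (A B : PropForm) : Prop :=
  ∀ s : ℕ → FOForm P, (∀ n, (s n).FV = ∅) → Pr (substF s A) → Pr (substF s B)

/-- The propositional rule `A / B` is admissible in the theory (substituting formulas). -/
def AdmThyF {P : ℕ → Type} (Pr : FOForm P → Prop) (A B : PropForm) : Prop :=
  ∀ s : ℕ → FOForm P, Pr (substF s A) → Pr (substF s B)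

/-! ## Classical (Tarskian) semantics for first-order logic -/

/-- A classical first-order structure for the language `P`. -/
structure FOStruct (P : ℕ → Type) where
  D : Type
  dne : Nonempty D
  interp : ∀ {n : ℕ}, P n → (Fin n → D) → Prop

/-- Classical satisfaction of a formula under a variable assignment. -/
def fsat {P : ℕ → Type} (M : FOStruct P) : FOForm P → (ℕ → M.D) → Prop
  | .pred p args, ρ => M.interp p (fun i => ρ (args i))
  | .bot, _ => False
  | .top, _ => True
  | .and A B, ρ => fsat M A ρ ∧ fsat M B ρ
  | .or A B, ρ => fsat M A ρ ∨ fsat M B ρ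
  | .imp A B, ρ => fsat M A ρ → fsat M B ρ
  | .all x A, ρ => ∀ d : M.D, fsat M A (Function.update ρ x d)
  | .ex x A, ρ => ∃ d : M.D, fsat M A (Function.update ρ x d)

/-- Validity in classical first-order logic `CQC` (equivalently, by completeness,
provability in `CQC`). -/
def CQCValid {P : ℕ → Type} (A : FOForm P) : Prop :=
  ∀ (M : FOStruct P) (ρ : ℕ → M.D), fsat M A ρ

/-- A formula of first-order logic is unifiable (in `CQC`) if some substitution instance of
it is provable in `CQC`. -/
def UnifiableCQC (A : LForm) : Prop := ∃ σ : FOSubst PureLang, CQCValid (σ.app A)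

/-- A ground substitution: it assigns `⊤` or `⊥` to the atomic formulas
(so its range consists of formulas built up from `⊤` and `⊥`). -/
def IsGroundSubst (σ : FOSubst PureLang) : Prop :=
  ∀ {n : ℕ} (p : PureLang n) (args : Fin n → ℕ),
    σ.app (.pred p args) = FOForm.top ∨ σ.app (.pred p args) = FOForm.bot

/-- The rule `A / B` is admissible in `CQC`. -/
def AdmCQC (A B : LForm) : Prop :=
  ∀ σ : FOSubst PureLang, CQCValid (σ.app A) → CQCValid (σ.app B)

/-! ## Consequence relations -/

/-- A (single-premise) consequence relation in the language `P`: reflexive, transitive,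
closed under weakening by theorems and under modus ponens. `der ⊤ A` expresses that `A`
is a theorem of the consequence relation. -/
structure ConsRel (P : ℕ → Type) where
  der : FOForm P → FOForm P → Prop
  refl : ∀ A, der A A
  trans : ∀ {A B C}, der A B → der B C → der A C
  thm_mono : ∀ {A B}, der .top B → der A B
  mp : ∀ {A B C}, der A (B.imp C) → der A B → der A C

/-!
Let `σ₀` unify `A` and let `T` be the universal closure of `A`. Put
`σ(R(x̄)) := (T ∧ R(x̄)) ∨ (¬T ∧ g_R(x̄))`, where the sentence `g_R(x̄) ∈ {⊤, ⊥}` is the truth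
value of `σ₀(R(x̄))` in the one-element model. Since `T` is a sentence, every model satisfies
`T` or `¬T`: in a model of `T`, `σ` acts as the identity, and in a model of `¬T` every `σ(C)`
evaluates like `σ₀(C)` in the one-element model. Hence `⊨ σ(A)`, admissibility gives
`⊨ σ(B)`, that is `⊨ T → B`, and `A ⊢ T` by generalization, so `A ⊢ B`.
-/

section Semantics

variable {P : ℕ → Type}

theorem fsat_congr (M : FOStruct P) (C : FOForm P) {ρ₁ ρ₂ : ℕ → M.D}
    (h : ∀ x ∈ C.FV, ρ₁ x = ρ₂ x) : fsat M C ρ₁ ↔ fsat M C ρ₂ := by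
  induction C generalizing ρ₁ ρ₂ with
  | pred p args =>
    have hargs : (fun i => ρ₁ (args i)) = fun i => ρ₂ (args i) :=
      funext fun i => h (args i) (by simp [FOForm.FV])
    simp only [fsat, hargs]
  | bot | top => rfl
  | and C D ihC ihD | or C D ihC ihD | imp C D ihC ihD =>
    simp only [FOForm.FV, Finset.mem_union] at h
    simp only [fsat, ihC fun x hx => h x (.inl hx), ihD fun x hx => h x (.inr hx)]
  | all x C ih | ex x C ih =>
    have hupd : ∀ d, fsat M C (Function.update ρ₁ x d) ↔ fsat M C (Function.update ρ₂ x d) :=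
      fun d => ih fun y hy => by
        by_cases hyx : y = x
        · simp [hyx]
        · simp [Function.update_of_ne hyx, h y (Finset.mem_erase.2 ⟨hyx, hy⟩)]
    simp only [fsat, hupd]

theorem fsat_iff_of_FV_eq_empty (M : FOStruct P) {C : FOForm P} (hC : C.FV = ∅)
    (ρ₁ ρ₂ : ℕ → M.D) : fsat M C ρ₁ ↔ fsat M C ρ₂ :=
  fsat_congr M C (by simp [hC])

theorem forall_fsat_or_forall_not_fsat (M : FOStruct P) {C : FOForm P} (hC : C.FV = ∅) :
    (∀ ρ, fsat M C ρ) ∨ ∀ ρ, ¬ fsat M C ρ := by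
  by_cases h : ∃ ρ, fsat M C ρ
  · obtain ⟨ρ₀, hρ₀⟩ := h
    exact .inl fun ρ => (fsat_iff_of_FV_eq_empty M hC ρ₀ ρ).1 hρ₀
  · exact .inr fun ρ hρ => h ⟨ρ, hρ⟩

theorem fsat_of_fsat_all {M : FOStruct P} {x : ℕ} {C : FOForm P} {ρ : ℕ → M.D}
    (h : fsat M (.all x C) ρ) : fsat M C ρ := by
  simpa using h (ρ x)

end Semantics

section Closure

variable {P : ℕ → Type}

def allClosure (l : List ℕ) (C : FOForm P) : FOForm P := l.foldr .all C

theorem FV_allClosure (l : List ℕ) (C : FOForm P) :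
    (allClosure l C).FV = C.FV \ l.toFinset := by
  induction l with
  | nil => simp [allClosure]
  | cons x l ih =>
    change ((allClosure l C).FV).erase x = _
    ext y
    simp only [ih, Finset.mem_erase, Finset.mem_sdiff, List.toFinset_cons, Finset.mem_insert,
      List.mem_toFinset]
    tauto

theorem FV_allClosure_FV (C : FOForm P) : (allClosure C.FV.toList C).FV = ∅ := by
  simp [FV_allClosure]

theorem fsat_of_fsat_allClosure {M : FOStruct P} (l : List ℕ) {C : FOForm P} {ρ : ℕ → M.D}
    (h : fsat M (allClosure l C) ρ) : fsat M C ρ := by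
  induction l with
  | nil => exact h
  | cons x l ih => exact ih (fsat_of_fsat_all h)

theorem ConsRel.der_allClosure (R : ConsRel P)
    (hgen : ∀ (C : FOForm P) (x : ℕ), R.der C (.all x C)) (C : FOForm P) (l : List ℕ) :
    R.der C (allClosure l C) := by
  induction l with
  | nil => exact R.refl C
  | cons x l ih => exact R.trans ih (hgen (allClosure l C) x)

end Closure

section OnePointModel

def onePointStruct : FOStruct PureLang := ⟨Unit, ⟨()⟩, fun _ _ => True⟩

noncomputable def groundAtom (σ₀ : FOSubst PureLang) {n : ℕ} (p : PureLang n)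
    (args : Fin n → ℕ) : LForm :=
  haveI := Classical.propDecidable
  if fsat onePointStruct (σ₀.app (.pred p args)) (fun _ => ()) then .top else .bot

theorem FV_groundAtom (σ₀ : FOSubst PureLang) {n : ℕ} (p : PureLang n) (args : Fin n → ℕ) :
    (groundAtom σ₀ p args).FV = ∅ := by
  unfold groundAtom; split <;> rfl

theorem fsat_groundAtom (σ₀ : FOSubst PureLang) {n : ℕ} (p : PureLang n) (args : Fin n → ℕ)
    (M : FOStruct PureLang) (ρ : ℕ → M.D) :
    fsat M (groundAtom σ₀ p args) ρ ↔
      fsat onePointStruct (σ₀.app (.pred p args)) (fun _ => ()) := by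
  unfold groundAtom; split <;> simp_all [fsat]

end OnePointModel

section ProjectiveUnifier

variable (σ₀ : FOSubst PureLang) (T : LForm)

noncomputable def projUnifierApp : LForm → LForm
  | .pred p args => .or (.and T (.pred p args)) (.and T.neg (groundAtom σ₀ p args))
  | .bot => .bot
  | .top => .top
  | .and C D => .and (projUnifierApp C) (projUnifierApp D)
  | .or C D => .or (projUnifierApp C) (projUnifierApp D)
  | .imp C D => .imp (projUnifierApp C) (projUnifierApp D)
  | .all x C => .all x (projUnifierApp C)
  | .ex x C => .ex x (projUnifierApp C)

noncomputable def projUnifier (hT : T.FV = ∅) : FOSubst PureLang where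
  app := projUnifierApp σ₀ T
  map_bot := rfl
  map_top := rfl
  map_and _ _ := rfl
  map_or _ _ := rfl
  map_imp _ _ := rfl
  map_all _ _ := rfl
  map_ex _ _ := rfl
  fv_pred p args := by
    simp [projUnifierApp, FOForm.neg, FOForm.FV, hT, FV_groundAtom]

variable {σ₀ T}

theorem fsat_projUnifierApp_of_forall_fsat {M : FOStruct PureLang}
    (hT : ∀ ρ, fsat M T ρ) (C : LForm) (ρ : ℕ → M.D) :
    fsat M (projUnifierApp σ₀ T C) ρ ↔ fsat M C ρ := by
  induction C generalizing ρ with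
  | pred p args =>
    simp only [projUnifierApp, FOForm.neg, fsat]
    have := hT ρ
    tauto
  | bot | top => rfl
  | and C D ihC ihD | or C D ihC ihD | imp C D ihC ihD =>
    simp only [projUnifierApp, fsat, ihC, ihD]
  | all x C ih | ex x C ih => simp only [projUnifierApp, fsat, ih]

theorem fsat_projUnifierApp_of_forall_not_fsat {M : FOStruct PureLang}
    (hT : ∀ ρ, ¬ fsat M T ρ) (C : LForm) (ρ : ℕ → M.D) :
    fsat M (projUnifierApp σ₀ T C) ρ ↔ fsat onePointStruct (σ₀.app C) (fun _ => ()) := by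
  induction C generalizing ρ with
  | pred p args =>
    simp only [projUnifierApp, FOForm.neg, fsat, fsat_groundAtom]
    have := hT ρ
    tauto
  | bot => simp [projUnifierApp, σ₀.map_bot, fsat]
  | top => simp [projUnifierApp, σ₀.map_top, fsat]
  | and C D ihC ihD => simp only [projUnifierApp, σ₀.map_and, fsat, ihC, ihD]
  | or C D ihC ihD => simp only [projUnifierApp, σ₀.map_or, fsat, ihC, ihD]
  | imp C D ihC ihD => simp only [projUnifierApp, σ₀.map_imp, fsat, ihC, ihD]
  | all x C ih =>
    obtain ⟨d⟩ := M.dne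
    simp only [projUnifierApp, σ₀.map_all, fsat, ih]
    exact ⟨fun h _ => h d, fun h _ => h ()⟩
  | ex x C ih =>
    obtain ⟨d⟩ := M.dne
    simp only [projUnifierApp, σ₀.map_ex, fsat, ih]
    exact ⟨fun ⟨_, h⟩ => ⟨(), h⟩, fun ⟨_, h⟩ => ⟨d, h⟩⟩

theorem CQCValid_projUnifier_app (hT : T.FV = ∅) {A : LForm} (hσ₀ : CQCValid (σ₀.app A))
    (hTA : ∀ (M : FOStruct PureLang) (ρ : ℕ → M.D), fsat M T ρ → fsat M A ρ) :
    CQCValid ((projUnifier σ₀ T hT).app A) := by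
  intro M ρ
  rcases forall_fsat_or_forall_not_fsat M hT with hM | hM
  · exact (fsat_projUnifierApp_of_forall_fsat hM A ρ).2 (hTA M ρ (hM ρ))
  · exact (fsat_projUnifierApp_of_forall_not_fsat hM A ρ).2 (hσ₀ _ _)

theorem CQCValid_imp_of_CQCValid_projUnifier_app (hT : T.FV = ∅) {B : LForm}
    (hB : CQCValid ((projUnifier σ₀ T hT).app B)) : CQCValid (T.imp B) := by
  intro M ρ hTρ
  have hM : ∀ ρ', fsat M T ρ' := fun ρ' => (fsat_iff_of_FV_eq_empty M hT ρ ρ').1 hTρ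
  exact (fsat_projUnifierApp_of_forall_fsat hM B ρ).1 (hB M ρ)

end ProjectiveUnifier

/-- Let `⊢` be a consequence relation for `CQC` (having the same theorems
as `CQC`) satisfying `C(x̄) ⊢ ∀x̄ C(x̄)` for all formulas `C`. Then for every unifiable
formula `A` and every formula `B`, if `A / B` is admissible in `CQC` then `A ⊢ B`:
`CQC` is almost structurally complete. -/
theorem cqc_almost_structurally_complete (R : ConsRel PureLang)
    (hthm : ∀ A : LForm, R.der .top A ↔ CQCValid A)
    (hgen : ∀ (C : LForm) (x : ℕ), R.der C (.all x C)) :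
    ∀ A B : LForm, UnifiableCQC A → AdmCQC A B → R.der A B := by
  intro A B ⟨σ₀, hσ₀⟩ hadm
  set T := allClosure A.FV.toList A
  have hT : T.FV = ∅ := FV_allClosure_FV A
  have hσA : CQCValid ((projUnifier σ₀ T hT).app A) :=
    CQCValid_projUnifier_app hT hσ₀ fun M ρ => fsat_of_fsat_allClosure _
  have hTB : CQCValid (T.imp B) := CQCValid_imp_of_CQCValid_projUnifier_app hT (hadm _ hσA)
  exact R.mp (R.thm_mono ((hthm _).2 hTB)) (R.der_allClosure hgen A _)
end
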